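/- arXiv:1712.08311 — 6 statements merged into one kernel-verified Lean document; each statement's English description precedes it below -/
import Mathlib

section
/- Let (W,S) be a Coxeter system with W finite. An element w ∈ W is join-irreducible in the right weak order if and only if w has exactly one descent, i.e., there is exactly one index i ∈ I with ℓ(w s_i) < ℓ(w). -/
/-- The right weak order on a Coxeter group: `u ≤ w` iff `ℓ(w) = ℓ(u) + ℓ(u⁻¹w)`. -/
def CoxeterSystem.weakLE {B W : Type*} [Group W] {M : CoxeterMatrix B}
    (cs : CoxeterSystem M W) (u w : W) : Prop :=
  cs.length w = cs.length u + cs.length (u⁻¹ * w)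

/-- `w` is a least upper bound of `S` in the right weak order. -/
def CoxeterSystem.IsWeakLUB {B W : Type*} [Group W] {M : CoxeterMatrix B}
    (cs : CoxeterSystem M W) (S : Set W) (w : W) : Prop :=
  (∀ x ∈ S, cs.weakLE x w) ∧ ∀ z : W, (∀ x ∈ S, cs.weakLE x z) → cs.weakLE w z

/-- `w` is join-irreducible in the right weak order: `w ≠ 1` and whenever `w` is a least
upper bound of a pair `{u, v}`, one has `u = w` or `v = w`. -/
def CoxeterSystem.IsJoinIrreducible {B W : Type*} [Group W] {M : CoxeterMatrix B}
    (cs : CoxeterSystem M W) (w : W) : Prop :=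
  w ≠ 1 ∧ ∀ u v : W, cs.IsWeakLUB {u, v} w → u = w ∨ v = w

/-!
The elements strictly below `w` in the weak order are exactly those below `w sᵢ` for some right
descent `i` of `w`. Hence if `i` is the only descent, any `u, v < w` are bounded above by `w sᵢ`,
so `w` is not their join. Conversely, the weak order is inclusion of left inversion sets, and the
left inversion set of `w` is that of `w sᵢ` together with `w sᵢ w⁻¹`; for two descents `i ≠ j`
these two extra reflections differ, so every common upper bound of `w sᵢ` and `w sⱼ` lies
above `w`.

Both facts about inversion sets rest on the strong exchange condition, which comes from the action
of `W` on `W × ℤˣ` in which `sᵢ` sends `(t, ε)` to `(sᵢ t sᵢ, ±ε)`, the sign flipping iff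
`t = sᵢ`. That `sᵢ ≠ sⱼ` for `i ≠ j` comes from the geometric representation, where `sᵢ sⱼ` acts
on the plane of `αᵢ, αⱼ` as a rotation by `2π / mᵢⱼ` and trivially on a complement.
-/

namespace CoxeterMatrix

variable {B : Type*} (M : CoxeterMatrix B)

/-- `M i j = 0` stands for `mᵢⱼ = ∞`; then `π / 0 = 0` and the entry is `-cos 0 = -1`,
as it should be. -/
noncomputable def cosEntry (i j : B) : ℝ := -Real.cos (Real.pi / M i j)

noncomputable def rootForm (i : B) : (B →₀ ℝ) →ₗ[ℝ] ℝ :=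
  Finsupp.linearCombination ℝ (M.cosEntry i)

noncomputable def geomReflection (i : B) : Module.End ℝ (B →₀ ℝ) :=
  LinearMap.id - (2 : ℝ) • (M.rootForm i).smulRight (Finsupp.single i 1)

theorem cosEntry_self (i : B) : M.cosEntry i i = 1 := by
  simp [cosEntry]

theorem cosEntry_comm (i j : B) : M.cosEntry i j = M.cosEntry j i := by
  rw [cosEntry, cosEntry, M.symmetric]

theorem rootForm_single (i j : B) : M.rootForm i (Finsupp.single j 1) = M.cosEntry i j := by
  simp [rootForm]

theorem geomReflection_apply (i : B) (v : B →₀ ℝ) :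
    M.geomReflection i v = v - (2 * M.rootForm i v) • Finsupp.single i 1 := by
  simp [geomReflection]

theorem geomReflection_of_rootForm_eq_zero {i : B} {v : B →₀ ℝ} (h : M.rootForm i v = 0) :
    M.geomReflection i v = v := by
  simp [geomReflection_apply, h]

theorem geomReflection_mul_self (i : B) : M.geomReflection i * M.geomReflection i = 1 := by
  refine LinearMap.ext fun v => ?_
  have h : M.rootForm i (M.geomReflection i v) = -M.rootForm i v := by
    rw [geomReflection_apply, map_sub, map_smul, rootForm_single, cosEntry_self, smul_eq_mul]
    ring
  rw [Module.End.mul_apply, geomReflection_apply, h, geomReflection_apply, Module.End.one_apply]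
  module

section Dihedral

variable {M} {i j : B}

local notation "θ" => Real.pi / (M i j : ℝ)
local notation "α " k:max => (Finsupp.single k (1 : ℝ) : B →₀ ℝ)

theorem sin_pi_div_pos (hij : i ≠ j) (hm : M i j ≠ 0) : 0 < Real.sin θ := by
  have h2 : (2 : ℝ) ≤ M i j := by
    exact_mod_cast (Nat.two_le_iff _).mpr ⟨hm, M.off_diagonal i j hij⟩
  apply Real.sin_pos_of_pos_of_lt_pi (by positivity)
  exact div_lt_self Real.pi_pos (by linarith)

theorem geomReflection_left_apply_plane (x y : ℝ) :
    M.geomReflection i (x • α i + y • α j) =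
      (2 * Real.cos θ * y - x) • α i + y • α j := by
  rw [geomReflection_apply, map_add, map_smul, map_smul, rootForm_single, rootForm_single,
    cosEntry_self, cosEntry, smul_eq_mul, smul_eq_mul]
  module

theorem geomReflection_right_apply_plane (x y : ℝ) :
    M.geomReflection j (x • α i + y • α j) =
      x • α i + (2 * Real.cos θ * x - y) • α j := by
  rw [geomReflection_apply, map_add, map_smul, map_smul, rootForm_single, rootForm_single,
    cosEntry_self, cosEntry_comm, cosEntry, smul_eq_mul, smul_eq_mul]
  module

theorem geomReflection_mul_pow_apply_plane (n : ℕ) (φ : ℝ) :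
    ((M.geomReflection i * M.geomReflection j) ^ n)
        (Real.sin (φ + θ) • α i + Real.sin φ • α j)
      = Real.sin (φ + n * (2 * θ) + θ) • α i + Real.sin (φ + n * (2 * θ)) • α j := by
  have sin_add_angle (x : ℝ) :
      Real.sin (x + θ) = 2 * Real.cos θ * Real.sin x - Real.sin (x - θ) := by
    rw [Real.sin_add, Real.sin_sub]; ring
  induction n with
  | zero => simp
  | succ n ih =>
    rw [pow_succ', Module.End.mul_apply, ih, Module.End.mul_apply,
      geomReflection_right_apply_plane, geomReflection_left_apply_plane]
    push_cast
    rw [show φ + (n + 1) * (2 * θ) = φ + n * (2 * θ) + 2 * θ by ring]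
    generalize φ + n * (2 * θ) = ψ
    have h1 := sin_add_angle (ψ + θ)
    have h2 := sin_add_angle (ψ + 2 * θ)
    rw [add_sub_cancel_right, add_assoc, ← two_mul] at h1
    rw [show ψ + 2 * θ - θ = ψ + θ by ring] at h2
    rw [h2, h1]

theorem geomReflection_mul_pow_coxeter_apply_plane (hm : M i j ≠ 0) (φ : ℝ) :
    ((M.geomReflection i * M.geomReflection j) ^ M i j)
        (Real.sin (φ + θ) • α i + Real.sin φ • α j)
      = Real.sin (φ + θ) • α i + Real.sin φ • α j := by
  have hperiod : φ + (M i j : ℕ) * (2 * θ) = φ + 2 * Real.pi := by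
    field_simp
  rw [geomReflection_mul_pow_apply_plane, hperiod, add_right_comm, Real.sin_add_two_pi,
    Real.sin_add_two_pi]

theorem geomReflection_mul_pow_coxeter_apply_single (hij : i ≠ j) (hm : M i j ≠ 0) :
    ((M.geomReflection i * M.geomReflection j) ^ M i j) (α i) = α i ∧
      ((M.geomReflection i * M.geomReflection j) ^ M i j) (α j) = α j := by
  have hsin := (sin_pi_div_pos hij hm).ne'
  have h0 := geomReflection_mul_pow_coxeter_apply_plane hm 0
  have h1 := geomReflection_mul_pow_coxeter_apply_plane hm (-θ)
  simp only [zero_add, Real.sin_zero, zero_smul, add_zero, neg_add_cancel, Real.sin_neg,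
    neg_smul, map_neg, map_smul, neg_inj] at h0 h1
  exact ⟨smul_right_injective _ hsin h0, smul_right_injective _ hsin h1⟩

theorem geomReflection_mul_pow_apply_of_rootForm_eq_zero {u : B →₀ ℝ}
    (hi : M.rootForm i u = 0) (hj : M.rootForm j u = 0) (n : ℕ) :
    ((M.geomReflection i * M.geomReflection j) ^ n) u = u := by
  induction n with
  | zero => rfl
  | succ n ih =>
    rw [pow_succ, Module.End.mul_apply, Module.End.mul_apply,
      geomReflection_of_rootForm_eq_zero M hj, geomReflection_of_rootForm_eq_zero M hi, ih]

theorem exists_eq_add_of_rootForm_eq_zero (hij : i ≠ j) (hm : M i j ≠ 0) (v : B →₀ ℝ) :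
    ∃ (u : B →₀ ℝ) (a b : ℝ), M.rootForm i u = 0 ∧ M.rootForm j u = 0 ∧
      v = u + a • α i + b • α j := by
  set c := Real.cos θ
  have hc : 1 - c ^ 2 ≠ 0 := by
    rw [← Real.sin_sq]; exact pow_ne_zero 2 (sin_pi_div_pos hij hm).ne'
  set a := (M.rootForm i v + c * M.rootForm j v) / (1 - c ^ 2)
  set b := (M.rootForm j v + c * M.rootForm i v) / (1 - c ^ 2)
  refine ⟨v - a • α i - b • α j, a, b, ?_, ?_, by abel⟩
  all_goals
    simp only [map_sub, map_smul, rootForm_single, cosEntry_self, cosEntry_comm M j i,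
      show M.cosEntry i j = -c from rfl, smul_eq_mul, a, b]
    field_simp
    ring

theorem geomReflection_mul_pow_coxeter (hij : i ≠ j) :
    (M.geomReflection i * M.geomReflection j) ^ M i j = 1 := by
  by_cases hm : M i j = 0
  · rw [hm, pow_zero]
  refine LinearMap.ext fun v => ?_
  obtain ⟨u, a, b, hi, hj, rfl⟩ := exists_eq_add_of_rootForm_eq_zero hij hm v
  obtain ⟨hαi, hαj⟩ := geomReflection_mul_pow_coxeter_apply_single hij hm
  rw [map_add, map_add, map_smul, map_smul, hαi, hαj,
    geomReflection_mul_pow_apply_of_rootForm_eq_zero hi hj, Module.End.one_apply]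

end Dihedral

theorem isLiftable_geomReflection : M.IsLiftable M.geomReflection := by
  intro i j
  rcases eq_or_ne i j with rfl | hij
  · rw [M.diagonal, pow_one, geomReflection_mul_self]
  · exact geomReflection_mul_pow_coxeter hij

end CoxeterMatrix

namespace CoxeterSystem

variable {B W : Type*} [Group W] {M : CoxeterMatrix B} (cs : CoxeterSystem M W)

local prefix:100 "s " => cs.simple
local prefix:100 "π " => cs.wordProd
local prefix:100 "ℓ " => cs.length
local prefix:100 "ris " => cs.rightInvSeq
local prefix:100 "lis " => cs.leftInvSeq

theorem simple_injective : Function.Injective cs.simple := by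
  intro i j hij
  by_contra hne
  have h : M.geomReflection i (Finsupp.single i 1) i =
      M.geomReflection j (Finsupp.single i 1) i := by
    rw [← cs.lift_apply_simple M.isLiftable_geomReflection, hij, cs.lift_apply_simple]
  simp [M.geomReflection_apply, M.rootForm_single, M.cosEntry_self,
    Finsupp.single_eq_of_ne hne] at h

section SignAction

open scoped Classical

noncomputable def signPerm (i : B) : Equiv.Perm (W × ℤˣ) :=
  Function.Involutive.toPerm (fun p => (s i * p.1 * s i, (if p.1 = s i then -1 else 1) * p.2))
    fun ⟨t, ε⟩ => by
      by_cases ht : t = s i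
      · simp [ht]
      · simp [ht, mul_assoc, mul_eq_one_iff_eq_inv]

theorem signPerm_apply (i : B) (t : W) (ε : ℤˣ) :
    cs.signPerm i (t, ε) = (s i * t * s i, (if t = s i then -1 else 1) * ε) := rfl

theorem prod_map_signPerm_apply (ω : List B) (t : W) (ε : ℤˣ) :
    (ω.map cs.signPerm).prod (t, ε) =
      (π ω * t * (π ω)⁻¹, (-1) ^ (ris ω).count t * ε) := by
  induction ω with
  | nil => simp
  | cons i ω ih =>
    have hiff : π ω * t * (π ω)⁻¹ = s i ↔ (π ω)⁻¹ * s i * π ω = t := by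
      constructor <;> intro h <;> rw [← h] <;> group
    rw [List.map_cons, List.prod_cons, Equiv.Perm.mul_apply, ih, signPerm_apply, wordProd_cons,
      rightInvSeq, List.count_cons]
    refine Prod.ext (by simp [mul_assoc]) ?_
    simp only [beq_iff_eq, hiff]
    split_ifs <;> simp [pow_succ, mul_comm]

def pairWord (i j : B) : ℕ → List B
  | 0 => []
  | n + 1 => i :: j :: pairWord i j n

theorem wordProd_pairWord (i j : B) (n : ℕ) : π (pairWord i j n) = (s i * s j) ^ n := by
  induction n with
  | zero => simp [pairWord]
  | succ n ih => rw [pairWord, wordProd_cons, wordProd_cons, ih, pow_succ', mul_assoc]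

theorem prod_map_signPerm_pairWord (i j : B) (n : ℕ) :
    ((pairWord i j n).map cs.signPerm).prod = (cs.signPerm i * cs.signPerm j) ^ n := by
  induction n with
  | zero => simp [pairWord]
  | succ n ih =>
    rw [pairWord, List.map_cons, List.map_cons, List.prod_cons, List.prod_cons, ih, pow_succ',
      mul_assoc]

theorem inv_pow_simple_mul_simple_mul_simple (i j : B) (n : ℕ) :
    ((s i * s j) ^ n)⁻¹ * s j = s j * (s i * s j) ^ n := by
  have h : s j * (s i * s j) * (s j)⁻¹ = (s i * s j)⁻¹ := by simp [mul_assoc]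
  rw [← inv_pow, ← h, conj_pow, inv_simple, mul_assoc, mul_assoc, simple_mul_simple_self,
    mul_one]

theorem rightInvSeq_pairWord (i j : B) (n : ℕ) :
    ris (pairWord i j n) = ((List.range (2 * n)).map fun r => s j * (s i * s j) ^ r).reverse := by
  induction n with
  | zero => simp [pairWord]
  | succ n ih =>
    rw [pairWord, rightInvSeq, rightInvSeq, ih, show 2 * (n + 1) = 2 * n + 1 + 1 by ring,
      List.range_succ, List.range_succ]
    simp only [List.map_append, List.map_cons, List.map_nil, List.reverse_append,
      List.reverse_cons, List.reverse_nil, List.nil_append, List.cons_append]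
    rw [wordProd_cons, wordProd_pairWord]
    have hconj := inv_pow_simple_mul_simple_mul_simple cs i j n
    refine congrArg₂ _ ?_ (congrArg₂ _ ?_ rfl)
    · rw [mul_inv_rev, inv_simple, hconj, show 2 * n + 1 = n + 1 + n by ring, pow_add, pow_succ]
      simp only [mul_assoc]
    · rw [hconj, mul_assoc, ← pow_add, two_mul]

/-- The reflections `sⱼ (sᵢ sⱼ)ʳ` in this sequence are periodic in `r` with period `mᵢⱼ`. -/
theorem even_count_rightInvSeq_pairWord (i j : B) (t : W) :
    Even ((ris (pairWord i j (M i j))).count t) := by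
  have hperiod : ((List.range (M i j)).map fun r => s j * (s i * s j) ^ (M i j + r)) =
      (List.range (M i j)).map fun r => s j * (s i * s j) ^ r := by
    simp only [pow_add, simple_mul_simple_pow, one_mul]
  rw [rightInvSeq_pairWord, List.count_reverse, two_mul, List.range_add, List.map_append,
    List.map_map, Function.comp_def, hperiod, List.count_append]
  exact ⟨_, rfl⟩

theorem isLiftable_signPerm : M.IsLiftable cs.signPerm := by
  intro i j
  ext ⟨t, ε⟩ : 1
  rw [← prod_map_signPerm_pairWord, prod_map_signPerm_apply, wordProd_pairWord,
    simple_mul_simple_pow, (cs.even_count_rightInvSeq_pairWord i j t).neg_one_pow]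
  simp

noncomputable def signAction : W →* Equiv.Perm (W × ℤˣ) :=
  cs.lift ⟨cs.signPerm, cs.isLiftable_signPerm⟩

/-- Equal to `-1` exactly when `t` is a right inversion of `w`. -/
noncomputable def inversionSign (w t : W) : ℤˣ := (cs.signAction w (t, 1)).2

theorem signAction_wordProd (ω : List B) : cs.signAction (π ω) = (ω.map cs.signPerm).prod := by
  rw [wordProd, map_list_prod, List.map_map]
  congr 1
  exact List.map_congr_left fun i _ => cs.lift_apply_simple cs.isLiftable_signPerm i

theorem inversionSign_wordProd (ω : List B) (t : W) :
    cs.inversionSign (π ω) t = (-1) ^ (ris ω).count t := by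
  rw [inversionSign, signAction_wordProd, prod_map_signPerm_apply, mul_one]

theorem signAction_apply (w t : W) (ε : ℤˣ) :
    cs.signAction w (t, ε) = (w * t * w⁻¹, cs.inversionSign w t * ε) := by
  obtain ⟨ω, rfl⟩ := cs.wordProd_surjective w
  rw [inversionSign_wordProd, signAction_wordProd, prod_map_signPerm_apply]

theorem inversionSign_mul (u v t : W) :
    cs.inversionSign (u * v) t = cs.inversionSign u (v * t * v⁻¹) * cs.inversionSign v t := by
  have h := cs.signAction_apply (u * v) t 1
  rw [map_mul, Equiv.Perm.mul_apply, signAction_apply, signAction_apply] at h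
  simpa using (congrArg Prod.snd h).symm

theorem inversionSign_self {t : W} (ht : cs.IsReflection t) : cs.inversionSign t t = -1 := by
  obtain ⟨u, i, rfl⟩ := ht
  have hu : cs.inversionSign u (s i) * cs.inversionSign u⁻¹ (u * s i * u⁻¹) = 1 := by
    have h := cs.inversionSign_mul u u⁻¹ (u * s i * u⁻¹)
    rw [mul_inv_cancel, show u⁻¹ * (u * s i * u⁻¹) * u⁻¹⁻¹ = s i by group] at h
    rw [← h, inversionSign, map_one, Equiv.Perm.one_apply]
  have hi : cs.inversionSign (s i) (s i) = -1 := by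
    rw [inversionSign, signAction, lift_apply_simple, signPerm_apply, if_pos rfl, mul_one]
  rw [inversionSign_mul, inversionSign_mul,
    show u⁻¹ * (u * s i * u⁻¹) * u⁻¹⁻¹ = s i by group,
    show s i * s i * (s i)⁻¹ = s i by group, hi, mul_right_comm, hu, one_mul]

theorem inversionSign_mul_self_of_isReflection (w : W) {t : W} (ht : cs.IsReflection t) :
    cs.inversionSign (w * t) t = -cs.inversionSign w t := by
  rw [inversionSign_mul, cs.inversionSign_self ht, mul_inv_cancel_right, mul_neg_one]

/-- The strong exchange condition, for an arbitrary word. -/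
theorem mem_rightInvSeq_of_isRightInversion {ω : List B} {t : W}
    (ht : cs.IsRightInversion (π ω) t) : t ∈ ris ω := by
  by_contra hmem
  obtain ⟨τ, hτ, hτω⟩ := cs.exists_isReduced (π ω * t)
  have hτt : t ∈ ris τ := by
    by_contra h
    have hsign := cs.inversionSign_mul_self_of_isReflection (π ω) ht.1
    rw [hτω, inversionSign_wordProd, inversionSign_wordProd, List.count_eq_zero.mpr h,
      List.count_eq_zero.mpr hmem] at hsign
    exact absurd hsign (by decide)
  have hlt := (cs.isRightInversion_of_mem_rightInvSeq hτ hτt).2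
  rw [← hτω, mul_assoc, ht.1.mul_self, mul_one] at hlt
  exact lt_asymm hlt ht.2

end SignAction

theorem isLeftInversion_iff_mem_leftInvSeq {ω : List B} (hω : cs.IsReduced ω) {t : W} :
    cs.IsLeftInversion (π ω) t ↔ t ∈ lis ω := by
  refine ⟨fun ht => ?_, cs.isLeftInversion_of_mem_leftInvSeq hω⟩
  rw [← List.mem_reverse, ← rightInvSeq_reverse]
  refine cs.mem_rightInvSeq_of_isRightInversion ?_
  rwa [wordProd_reverse, isRightInversion_inv_iff]

theorem isLeftInversion_simple_mul_iff {w : W} {i : B} (hi : cs.IsLeftDescent w i) {t : W} :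
    cs.IsLeftInversion (s i * w) t ↔ t ≠ s i ∧ cs.IsLeftInversion w (s i * t * s i) := by
  obtain ⟨τ, hτ, hτw⟩ := cs.exists_isReduced (s i * w)
  have hw : w = π (i :: τ) := by rw [wordProd_cons, ← hτw, simple_mul_simple_cancel_left]
  have hiτ : cs.IsReduced (i :: τ) := by
    have := cs.isLeftDescent_iff.mp hi
    rw [IsReduced, ← hw, List.length_cons, ← hτ.eq, ← hτw]
    omega
  have hnot : s i ∉ lis τ := by
    rw [← cs.isLeftInversion_iff_mem_leftInvSeq hτ, ← hτw, IsLeftInversion,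
      simple_mul_simple_cancel_left]
    exact fun h => lt_asymm h.2 hi
  have hconj : s i * t * s i = MulAut.conj (s i) t := by simp
  have hfix : s i * t * s i = s i ↔ t = s i := by
    rw [mul_assoc, mul_eq_left, mul_eq_one_iff_eq_inv, inv_simple]
  rw [hτw, cs.isLeftInversion_iff_mem_leftInvSeq hτ, hw,
    cs.isLeftInversion_iff_mem_leftInvSeq hiτ, leftInvSeq, List.mem_cons, hfix, hconj,
    List.mem_map_of_injective (MulAut.conj (s i)).injective]
  exact ⟨fun h => ⟨ne_of_mem_of_not_mem h hnot, Or.inr h⟩,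
    fun ⟨hne, h⟩ => h.resolve_left hne⟩

theorem isLeftInversion_iff_of_isRightDescent {w : W} {i : B} (hi : cs.IsRightDescent w i)
    {t : W} :
    cs.IsLeftInversion w t ↔ cs.IsLeftInversion (w * s i) t ∨ t = w * s i * w⁻¹ := by
  obtain ⟨τ, hτ, hτw⟩ := cs.exists_isReduced (w * s i)
  have hw : w = π (τ.concat i) := by
    rw [wordProd_concat, ← hτw, simple_mul_simple_cancel_right]
  have hτi : cs.IsReduced (τ.concat i) := by
    have := cs.isRightDescent_iff.mp hi
    rw [IsReduced, ← hw, List.length_concat, ← hτ.eq, ← hτw]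
    omega
  rw [hτw, cs.isLeftInversion_iff_mem_leftInvSeq hτ, hw,
    cs.isLeftInversion_iff_mem_leftInvSeq hτi, leftInvSeq_concat, List.concat_eq_append,
    List.mem_append, List.mem_singleton, wordProd_concat, mul_inv_rev, inv_simple, mul_assoc]

theorem length_le_of_weakLE {u w : W} (h : cs.weakLE u w) : ℓ u ≤ ℓ w :=
  h ▸ Nat.le_add_right _ _

theorem weakLE_mul_simple {w : W} {i : B} (hi : cs.IsRightDescent w i) :
    cs.weakLE (w * s i) w := by
  have := cs.isRightDescent_iff.mp hi
  rw [weakLE, mul_inv_rev, inv_simple, inv_mul_cancel_right, length_simple]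
  omega

theorem isLeftInversion_of_weakLE {u z t : W} (h : cs.weakLE u z)
    (ht : cs.IsLeftInversion u t) : cs.IsLeftInversion z t := by
  refine ⟨ht.1, ?_⟩
  calc ℓ (t * z) = ℓ (t * u * (u⁻¹ * z)) := by group
    _ ≤ ℓ (t * u) + ℓ (u⁻¹ * z) := cs.length_mul_le _ _
    _ < ℓ u + ℓ (u⁻¹ * z) := Nat.add_lt_add_right ht.2 _
    _ = ℓ z := h.symm

theorem weakLE_of_forall_isLeftInversion {u z : W}
    (h : ∀ t, cs.IsLeftInversion u t → cs.IsLeftInversion z t) : cs.weakLE u z := by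
  induction hn : ℓ u generalizing u z with
  | zero => simp [weakLE, cs.length_eq_zero_iff.mp hn]
  | succ n ih =>
    obtain ⟨i, hi⟩ := cs.exists_leftDescent_of_ne_one (w := u) (by rintro rfl; simp at hn)
    have hzi : cs.IsLeftDescent z i := by
      simpa using h (s i) ((cs.isLeftInversion_simple_iff_isLeftDescent u i).mpr hi)
    have hu := cs.isLeftDescent_iff.mp hi
    have hz := cs.isLeftDescent_iff.mp hzi
    have hle : cs.weakLE (s i * u) (s i * z) := by
      refine ih (fun t ht => ?_) (by omega)
      rw [cs.isLeftInversion_simple_mul_iff hi] at ht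
      rw [cs.isLeftInversion_simple_mul_iff hzi]
      exact ⟨ht.1, h _ ht.2⟩
    rw [weakLE, show (s i * u)⁻¹ * (s i * z) = u⁻¹ * z by group] at hle
    rw [weakLE]
    omega

theorem exists_isRightDescent_weakLE_mul_simple {u w : W} (h : cs.weakLE u w) (hne : u ≠ w) :
    ∃ i, cs.IsRightDescent w i ∧ cs.weakLE u (w * s i) := by
  obtain ⟨i, hi⟩ := cs.exists_rightDescent_of_ne_one (w := u⁻¹ * w)
    (by rwa [Ne, inv_mul_eq_one])
  have hx := cs.isRightDescent_iff.mp hi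
  have hw := cs.length_mul_le (w * s i) (s i)
  have hwi : ℓ (w * s i) ≤ ℓ u + ℓ (u⁻¹ * w * s i) := by
    simpa [mul_assoc] using cs.length_mul_le u (u⁻¹ * w * s i)
  rw [simple_mul_simple_cancel_right, length_simple] at hw
  unfold weakLE at h
  refine ⟨i, ?_, ?_⟩
  · unfold IsRightDescent; omega
  · rw [weakLE, ← mul_assoc]; omega

theorem isWeakLUB_mul_simple_pair {w : W} {i j : B} (hi : cs.IsRightDescent w i)
    (hj : cs.IsRightDescent w j) (hij : i ≠ j) : cs.IsWeakLUB {w * s i, w * s j} w := by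
  refine ⟨by simp [cs.weakLE_mul_simple hi, cs.weakLE_mul_simple hj], fun z hz => ?_⟩
  simp only [Set.mem_insert_iff, Set.mem_singleton_iff, forall_eq_or_imp, forall_eq] at hz
  refine cs.weakLE_of_forall_isLeftInversion fun t ht => ?_
  rcases (cs.isLeftInversion_iff_of_isRightDescent hi).mp ht with hti | rfl
  · exact cs.isLeftInversion_of_weakLE hz.1 hti
  · refine cs.isLeftInversion_of_weakLE hz.2 <|
      ((cs.isLeftInversion_iff_of_isRightDescent hj).mp ht).resolve_right fun h => hij ?_
    exact cs.simple_injective (by simpa using h)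

end CoxeterSystem

theorem joinIrreducible_iff_existsUnique_descent_general
    {B W : Type*} [Group W] {M : CoxeterMatrix B}
    (cs : CoxeterSystem M W) (w : W) :
    cs.IsJoinIrreducible w ↔ ∃! i : B, cs.IsRightDescent w i := by
  constructor
  · rintro ⟨hw, hirr⟩
    obtain ⟨i, hi⟩ := cs.exists_rightDescent_of_ne_one hw
    refine ⟨i, hi, fun j hj => by_contra fun hji => ?_⟩
    rcases hirr _ _ (cs.isWeakLUB_mul_simple_pair hj hi hji) with h | h
    · exact cs.length_mul_simple_ne w j (congrArg cs.length h)
    · exact cs.length_mul_simple_ne w i (congrArg cs.length h)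
  · rintro ⟨i, hi, huniq⟩
    refine ⟨fun hw => cs.not_isRightDescent_one i (hw ▸ hi), fun u v hlub => ?_⟩
    by_contra! hne
    have below (x : W) (hx : cs.weakLE x w) (hxw : x ≠ w) :
        cs.weakLE x (w * cs.simple i) := by
      obtain ⟨j, hj, hxj⟩ := cs.exists_isRightDescent_weakLE_mul_simple hx hxw
      rwa [← huniq j hj]
    have hle := hlub.2 _ (by
      simp only [Set.mem_insert_iff, Set.mem_singleton_iff, forall_eq_or_imp, forall_eq]
      exact ⟨below u (hlub.1 u (by simp)) hne.1, below v (hlub.1 v (by simp)) hne.2⟩)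
    exact absurd (cs.length_le_of_weakLE hle) (not_le.mpr hi)

/-- Let `(W, S)` be a Coxeter system with `W` finite.  An element `w ∈ W` is join-irreducible
in the right weak order if and only if `w` has exactly one (right) descent. -/
theorem joinIrreducible_iff_existsUnique_descent
    {B W : Type*} [Group W] [Finite W] {M : CoxeterMatrix B}
    (cs : CoxeterSystem M W) (w : W) :
    cs.IsJoinIrreducible w ↔ ∃! i : B, cs.IsRightDescent w i :=
  joinIrreducible_iff_existsUnique_descent_general cs w
end

section
/- An element w ∈ 𝔖_{n+1} is join-irreducible in the right weak order if and only if w has exactly one descent, i.e., there is exactly one index d ∈ {1,…,n} with w(d) > w(d+1). -/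
/-- The inversion set of `w ∈ 𝔖_{n+1}` (permutations of `Fin (n+1)`, i.e. of `{1,…,n+1}`):
pairs `(a, b)` with `b < a` and `w⁻¹(a) < w⁻¹(b)`. -/
def invSetA (n : ℕ) (w : Equiv.Perm (Fin (n + 1))) : Set (Fin (n + 1) × Fin (n + 1)) :=
  {p | p.2 < p.1 ∧ w.symm p.1 < w.symm p.2}

/-- The right weak order on `𝔖_{n+1}`: `u ≤ w` iff `inv(u) ⊆ inv(w)`. -/
def weakLEA (n : ℕ) (u w : Equiv.Perm (Fin (n + 1))) : Prop :=
  invSetA n u ⊆ invSetA n w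

/-- `w` is a least upper bound of `S` in the right weak order on `𝔖_{n+1}`. -/
def IsWeakLUBA (n : ℕ) (S : Set (Equiv.Perm (Fin (n + 1)))) (w : Equiv.Perm (Fin (n + 1))) :
    Prop :=
  (∀ x ∈ S, weakLEA n x w) ∧ ∀ z, (∀ x ∈ S, weakLEA n x z) → weakLEA n w z

/-- `w` is join-irreducible in the right weak order on `𝔖_{n+1}`. -/
def IsJoinIrreducibleA (n : ℕ) (w : Equiv.Perm (Fin (n + 1))) : Prop :=
  w ≠ 1 ∧ ∀ u v, IsWeakLUBA n {u, v} w → u = w ∨ v = w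

/-- `d` is a descent of `w ∈ 𝔖_{n+1}`: `w(d) > w(d+1)`.
(Position `d : Fin n` corresponds to the 1-indexed position `d + 1 ∈ {1,…,n}`.) -/
def IsDescentA (n : ℕ) (w : Equiv.Perm (Fin (n + 1))) (d : Fin n) : Prop :=
  w d.succ < w d.castSucc

/-! A permutation without descents is increasing, hence the identity. Right multiplication by the
adjacent transposition `s_d` at a descent `d` removes exactly the inversion `(w(d), w(d+1))`, so two
distinct descents `d ≠ e` exhibit `w` as the join of `w s_d` and `w s_e`. Conversely, if `d` is the
only descent then `w` is increasing on the positions `≤ d` and on those `> d`, so every inversion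
`(x, y)` of `w` satisfies `x ≤ w(d)` and `w(d+1) ≤ y`; an element `u ≤ w` inverting
`(w(d), w(d+1))` therefore inverts all of them. Hence every `u < w` lies below `w s_d`, and `w` is
not the join of two elements strictly below it. -/

open Equiv

section
variable {n : ℕ} {w u : Perm (Fin (n + 1))}

lemma perm_eq_one_of_strictMono {α : Type*} [LinearOrder α] [Finite α] {e : Perm α}
    (he : StrictMono e) : e = 1 :=
  Equiv.ext fun _ => he.apply_eq

lemma apply_mem_invSetA_iff {p q : Fin (n + 1)} :
    (w p, w q) ∈ invSetA n w ↔ w q < w p ∧ p < q := by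
  simp [invSetA]

lemma symm_lt_symm_of_notMem_invSetA {x y : Fin (n + 1)} (hyx : y < x)
    (h : (x, y) ∉ invSetA n u) : u.symm y < u.symm x :=
  lt_of_le_of_ne (not_lt.mp fun hlt => h ⟨hyx, hlt⟩) (u.symm.injective.ne hyx.ne)

lemma invSetA_injective : Function.Injective (invSetA n) := by
  intro u v h
  suffices StrictMono (u⁻¹ * v) from inv_mul_eq_one.mp (perm_eq_one_of_strictMono this)
  intro i j hij
  rcases (v.injective.ne hij.ne).lt_or_gt with hv | hv
  · have : (v j, v i) ∉ invSetA n v := by simp [apply_mem_invSetA_iff, hij.le]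
    simpa using symm_lt_symm_of_notMem_invSetA hv (h ▸ this)
  · have : (v i, v j) ∈ invSetA n v := apply_mem_invSetA_iff.mpr ⟨hv, hij⟩
    simpa using (h ▸ this : (v i, v j) ∈ invSetA n u).2

lemma strictMonoOn_of_forall_not_isDescentA {s : Set (Fin (n + 1))} (hs : s.OrdConnected)
    (h : ∀ k : Fin n, k.castSucc ∈ s → k.succ ∈ s → ¬ IsDescentA n w k) :
    StrictMonoOn w s := by
  refine strictMonoOn_of_lt_succ hs fun a ha has hsucc => ?_
  obtain ⟨k, rfl⟩ := Fin.exists_castSucc_eq.mpr (by simpa [← Fin.top_eq_last] using ha)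
  rw [Fin.orderSucc_castSucc] at hsucc ⊢
  exact lt_of_le_of_ne (not_lt.mp (h k has hsucc)) (w.injective.ne Fin.castSucc_lt_succ.ne)

lemma eq_one_of_forall_not_isDescentA (h : ∀ k, ¬ IsDescentA n w k) : w = 1 :=
  perm_eq_one_of_strictMono <| strictMonoOn_univ.mp <|
    strictMonoOn_of_forall_not_isDescentA Set.ordConnected_univ fun k _ _ => h k

lemma swap_castSucc_succ_lt_swap_iff (d : Fin n) {p q : Fin (n + 1)} :
    swap d.castSucc d.succ p < swap d.castSucc d.succ q ↔
      p < q ∧ ¬ (p = d.castSucc ∧ q = d.succ) ∨ (p = d.succ ∧ q = d.castSucc) := by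
  simp only [swap_apply_def]
  split_ifs <;> simp only [Fin.lt_def, Fin.ext_iff, Fin.val_castSucc, Fin.val_succ] at * <;> omega

lemma apply_mem_invSetA_of_isDescentA {d : Fin n} (hd : IsDescentA n w d) :
    (w d.castSucc, w d.succ) ∈ invSetA n w :=
  apply_mem_invSetA_iff.mpr ⟨hd, Fin.castSucc_lt_succ⟩

lemma invSetA_mul_swap {d : Fin n} (hd : IsDescentA n w d) :
    invSetA n (w * swap d.castSucc d.succ) = invSetA n w \ {(w d.castSucc, w d.succ)} := by
  ext ⟨x, y⟩
  obtain ⟨p, rfl⟩ := w.surjective x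
  obtain ⟨q, rfl⟩ := w.surjective y
  have hsymm : ∀ r, (w * swap d.castSucc d.succ).symm (w r) = swap d.castSucc d.succ r := by
    intro r
    simp [Perm.mul_def]
  simp only [invSetA, Set.mem_ofPred_eq, hsymm, symm_apply_apply, swap_castSucc_succ_lt_swap_iff,
    Set.mem_sdiff, Set.mem_singleton_iff, Prod.mk.injEq, w.injective.eq_iff]
  constructor
  · rintro ⟨hqp, ⟨hpq, hne⟩ | ⟨rfl, rfl⟩⟩
    · exact ⟨⟨hqp, hpq⟩, hne⟩
    · exact absurd hd hqp.not_gt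
  · rintro ⟨⟨hqp, hpq⟩, hne⟩
    exact ⟨hqp, .inl ⟨hpq, hne⟩⟩

lemma mul_swap_ne_self (d : Fin n) : w * swap d.castSucc d.succ ≠ w := fun h =>
  Fin.castSucc_lt_succ.ne (swap_eq_one_iff.mp (mul_eq_left.mp h))

lemma isWeakLUBA_pair_of_union_eq {u v : Perm (Fin (n + 1))}
    (h : invSetA n u ∪ invSetA n v = invSetA n w) : IsWeakLUBA n {u, v} w := by
  refine ⟨?_, fun z hz => ?_⟩
  · rintro x (rfl | rfl) <;> rw [weakLEA, ← h]
    exacts [Set.subset_union_left, Set.subset_union_right]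
  · rw [weakLEA, ← h]
    exact Set.union_subset (hz u (.inl rfl)) (hz v (.inr rfl))

lemma not_isJoinIrreducibleA_of_isDescentA_of_ne {d e : Fin n} (hd : IsDescentA n w d)
    (he : IsDescentA n w e) (hde : d ≠ e) : ¬ IsJoinIrreducibleA n w := by
  rintro ⟨-, hirr⟩
  have hpair : (w d.castSucc, w d.succ) ≠ (w e.castSucc, w e.succ) := by
    simpa [w.injective.eq_iff] using hde
  have hlub : IsWeakLUBA n {w * swap d.castSucc d.succ, w * swap e.castSucc e.succ} w := by
    apply isWeakLUBA_pair_of_union_eq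
    rw [invSetA_mul_swap hd, invSetA_mul_swap he, ← Set.sdiff_inter,
      (Set.disjoint_singleton.mpr hpair).inter_eq, Set.sdiff_empty]
  rcases hirr _ _ hlub with h | h
  · exact mul_swap_ne_self d h
  · exact mul_swap_ne_self e h

section UniqueDescent

variable {d : Fin n} (huniq : ∀ k, IsDescentA n w k → k = d)
include huniq

lemma strictMonoOn_Iic_castSucc_of_unique_descent : StrictMonoOn w (Set.Iic d.castSucc) :=
  strictMonoOn_of_forall_not_isDescentA Set.ordConnected_Iic fun k _ hk hdesc =>
    Fin.castSucc_lt_succ.not_ge (huniq k hdesc ▸ hk)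

lemma strictMonoOn_Ici_succ_of_unique_descent : StrictMonoOn w (Set.Ici d.succ) :=
  strictMonoOn_of_forall_not_isDescentA Set.ordConnected_Ici fun k hk _ hdesc =>
    Fin.castSucc_lt_succ.not_ge (huniq k hdesc ▸ hk)

lemma notMem_invSetA_of_unique_descent {x y : Fin (n + 1)}
    (hblock : w.symm x ≤ d.castSucc ∧ w.symm y ≤ d.castSucc ∨
      d.succ ≤ w.symm x ∧ d.succ ≤ w.symm y) : (x, y) ∉ invSetA n w := by
  rintro ⟨hyx, hlt⟩
  have hmono : w (w.symm x) < w (w.symm y) := by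
    rcases hblock with ⟨hx, hy⟩ | ⟨hx, hy⟩
    · exact strictMonoOn_Iic_castSucc_of_unique_descent huniq hx hy hlt
    · exact strictMonoOn_Ici_succ_of_unique_descent huniq hx hy hlt
  simp only [apply_symm_apply] at hmono
  exact hyx.not_gt hmono

lemma symm_le_castSucc_and_succ_le_symm_of_mem_invSetA {x y : Fin (n + 1)}
    (h : (x, y) ∈ invSetA n w) : w.symm x ≤ d.castSucc ∧ d.succ ≤ w.symm y := by
  have hy : d.succ ≤ w.symm y := by
    by_contra! hy
    have hy := Fin.le_castSucc_iff.mpr hy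
    exact notMem_invSetA_of_unique_descent huniq (.inl ⟨h.2.le.trans hy, hy⟩) h
  refine ⟨?_, hy⟩
  by_contra! hx
  exact notMem_invSetA_of_unique_descent huniq
    (.inr ⟨Fin.castSucc_lt_iff_succ_le.mp hx, hy⟩) h

lemma eq_of_weakLEA_of_apply_mem_invSetA (hle : weakLEA n u w)
    (hmem : (w d.castSucc, w d.succ) ∈ invSetA n u) : u = w := by
  refine invSetA_injective (hle.antisymm ?_)
  rintro ⟨x, y⟩ hxy
  -- `u⁻¹ x ≤ u⁻¹ w(d) < u⁻¹ w(d+1) ≤ u⁻¹ y`: each outer step compares two values in one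
  -- increasing block of `w`, which `u ≤ w` cannot invert.
  obtain ⟨hx, hy⟩ := symm_le_castSucc_and_succ_le_symm_of_mem_invSetA huniq hxy
  have hxa : u.symm x ≤ u.symm (w d.castSucc) := by
    have : x ≤ w d.castSucc := by
      simpa using (strictMonoOn_Iic_castSucc_of_unique_descent huniq).monotoneOn hx
        Set.self_mem_Iic hx
    rcases this.eq_or_lt with rfl | hlt
    · rfl
    · refine (symm_lt_symm_of_notMem_invSetA hlt fun hinv => ?_).le
      exact notMem_invSetA_of_unique_descent huniq (.inl ⟨by simp, hx⟩) (hle hinv)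
  have hby : u.symm (w d.succ) ≤ u.symm y := by
    have : w d.succ ≤ y := by
      simpa using (strictMonoOn_Ici_succ_of_unique_descent huniq).monotoneOn
        Set.self_mem_Ici hy hy
    rcases this.eq_or_lt with rfl | hlt
    · rfl
    · refine (symm_lt_symm_of_notMem_invSetA hlt fun hinv => ?_).le
      exact notMem_invSetA_of_unique_descent huniq (.inr ⟨hy, by simp⟩) (hle hinv)
  exact ⟨hxy.1, hxa.trans_lt (hmem.2.trans_le hby)⟩

lemma weakLEA_mul_swap_of_weakLEA_of_ne (hd : IsDescentA n w d) (hle : weakLEA n u w)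
    (hne : u ≠ w) : weakLEA n u (w * swap d.castSucc d.succ) := by
  rw [weakLEA, invSetA_mul_swap hd]
  exact Set.subset_sdiff_singleton hle fun hmem =>
    hne (eq_of_weakLEA_of_apply_mem_invSetA huniq hle hmem)

lemma isJoinIrreducibleA_of_unique_descent (hd : IsDescentA n w d) :
    IsJoinIrreducibleA n w := by
  refine ⟨fun h1 => ?_, fun u v hlub => ?_⟩
  · subst h1
    exact Fin.castSucc_lt_succ.not_gt hd
  by_contra! hne
  have hbelow : weakLEA n w (w * swap d.castSucc d.succ) := by
    refine hlub.2 _ ?_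
    rintro x (rfl | rfl)
    · exact weakLEA_mul_swap_of_weakLEA_of_ne huniq hd (hlub.1 _ (.inl rfl)) hne.1
    · exact weakLEA_mul_swap_of_weakLEA_of_ne huniq hd (hlub.1 _ (.inr rfl)) hne.2
  simpa [invSetA_mul_swap hd] using hbelow (apply_mem_invSetA_of_isDescentA hd)

end UniqueDescent

end

theorem isJoinIrreducibleA_iff_existsUnique_descent_general (n : ℕ)
    (w : Equiv.Perm (Fin (n + 1))) :
    IsJoinIrreducibleA n w ↔ ∃! d : Fin n, IsDescentA n w d := by
  refine ⟨fun hw => ?_, fun ⟨d, hd, huniq⟩ => isJoinIrreducibleA_of_unique_descent huniq hd⟩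
  obtain ⟨d, hd⟩ : ∃ d, IsDescentA n w d := by
    by_contra! h
    exact hw.1 (eq_one_of_forall_not_isDescentA h)
  exact ⟨d, hd, fun e he => by_contra fun hed =>
    not_isJoinIrreducibleA_of_isDescentA_of_ne hd he (Ne.symm hed) hw⟩

/-- An element `w ∈ 𝔖_{n+1}` is join-irreducible in the right weak order if and only if
`w` has exactly one descent. -/
theorem isJoinIrreducibleA_iff_existsUnique_descent (n : ℕ) (hn : 1 ≤ n)
    (w : Equiv.Perm (Fin (n + 1))) :
    IsJoinIrreducibleA n w ↔ ∃! d : Fin n, IsDescentA n w d :=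
  isJoinIrreducibleA_iff_existsUnique_descent_general n w
end

section
/- Let w ∈ 𝔖_{n+1} and let d be a descent of w. Set a_d = w(d), b_d = w(d+1), X_d = w({d+1,…,n+1}), R_d = ({b_d,…,a_d−1} ∩ X_d) ∪ {a_d+1,…,n+1}, l_d = n+1−#R_d, and let w_d ∈ 𝔖_{n+1} be the unique permutation strictly increasing on {1,…,l_d} and on {l_d+1,…,n+1} with w_d({l_d+1,…,n+1}) = R_d. Then: (1) inv(w_d) ⊆ inv(w), i.e., w_d ≤ w in the right weak order; (2) w_d has exactly one descent, namely l_d; and (3) w_d s_{l_d} w_d⁻¹ equals the transposition (a_d b_d), which equals w s_d w⁻¹, where s_i denotes the transposition (i, i+1). -/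
/-- The set `R_d = ([b_d, a_d−1] ∩ X_d) ∪ [a_d+1, n+1]`, where `a_d = w(d)`, `b_d = w(d+1)`
and `X_d = w({d+1,…,n+1})` (everything written 0-indexed). -/
def RsetA (n : ℕ) (w : Equiv.Perm (Fin (n + 1))) (d : Fin n) : Set (Fin (n + 1)) :=
  ({v | w d.succ ≤ v ∧ v < w d.castSucc} ∩ ⇑w '' {j | (d : ℕ) < (j : ℕ)}) ∪
    {v | w d.castSucc < v}

/-- `u` is the permutation `w_d`: strictly increasing on the first `l_d = n+1−#R_d` positions
and on the remaining positions, with `u({l_d+1,…,n+1}) = R_d`. -/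
def IsWdA (n : ℕ) (w : Equiv.Perm (Fin (n + 1))) (d : Fin n)
    (u : Equiv.Perm (Fin (n + 1))) : Prop :=
  StrictMonoOn ⇑u {p : Fin (n + 1) | (p : ℕ) < n + 1 - (RsetA n w d).ncard} ∧
  StrictMonoOn ⇑u {p : Fin (n + 1) | n + 1 - (RsetA n w d).ncard ≤ (p : ℕ)} ∧
  ⇑u '' {p : Fin (n + 1) | n + 1 - (RsetA n w d).ncard ≤ (p : ℕ)} = RsetA n w d

/-!
`w_d` is Grassmannian: it increases on the position blocks `[0, l_d)` and `[l_d, n]`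
(0-indexed), so its only possible descent is at the block boundary, every inversion `(x, y)` of
it has `y ∈ R_d` and `x ∉ R_d`, and the boundary values are `max R_dᶜ = a_d` and
`min R_d = b_d`. For such a pair, `x ≤ a_d`, and either `x = a_d` or `x ∈ [b_d, a_d)` lies
outside `X_d`, i.e. to the left of `d` in `w`; in both cases `x` stands left of `y ∈ X_d` in
`w`, so `w` inverts the pair as well.
-/

open Equiv

section Grassmannian

variable {n l : ℕ} {u : Perm (Fin (n + 1))}

theorem succ_eq_of_isDescentA (h₁ : StrictMonoOn u {p | (p : ℕ) < l})
    (h₂ : StrictMonoOn u {p | l ≤ (p : ℕ)}) {d : Fin n} (hd : IsDescentA n u d) :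
    (d : ℕ) + 1 = l := by
  have hlt : d.castSucc < d.succ := Fin.castSucc_lt_succ
  rcases lt_trichotomy ((d : ℕ) + 1) l with h | h | h
  · exact absurd (h₁ (show (d : ℕ) < l by omega) (show (d : ℕ) + 1 < l from h) hlt)
      (not_lt_of_gt hd)
  · exact h
  · exact absurd (h₂ (show l ≤ (d : ℕ) by omega) (show l ≤ (d : ℕ) + 1 by omega) hlt)
      (not_lt_of_gt hd)

theorem symm_lt_and_le_symm_of_mem_invSetA (h₁ : StrictMonoOn u {p | (p : ℕ) < l})
    (h₂ : StrictMonoOn u {p | l ≤ (p : ℕ)}) {x y : Fin (n + 1)} (h : (x, y) ∈ invSetA n u) :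
    (u.symm x : ℕ) < l ∧ l ≤ (u.symm y : ℕ) := by
  obtain ⟨hyx, hinv⟩ := h
  have hinv' : (u.symm x : ℕ) < u.symm y := hinv
  by_contra hcon
  have hxy : x < y := by
    rw [← u.apply_symm_apply x, ← u.apply_symm_apply y]
    rcases Nat.lt_or_ge (u.symm y : ℕ) l with hy | hy
    · exact h₁ (show (u.symm x : ℕ) < l by omega) hy hinv
    · exact h₂ (show l ≤ (u.symm x : ℕ) by omega) hy hinv
  exact absurd hyx (not_lt_of_gt hxy)

theorem apply_eq_of_isGreatest (h₁ : StrictMonoOn u {p | (p : ℕ) < l}) {a : Fin (n + 1)}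
    (ha : IsGreatest {v | (u.symm v : ℕ) < l} a) (p : Fin (n + 1)) (hp : (p : ℕ) + 1 = l) :
    u p = a := by
  have ha₁ : (u.symm a : ℕ) < l := ha.1
  refine le_antisymm (ha.2 (show (u.symm (u p) : ℕ) < l by simp; omega)) ?_
  have hmono := (h₁.le_iff_le ha₁ (show (p : ℕ) < l by omega)).2
  rw [u.apply_symm_apply] at hmono
  exact hmono (by rw [Fin.le_def]; omega)

theorem apply_eq_of_isLeast (h₂ : StrictMonoOn u {p | l ≤ (p : ℕ)}) {b : Fin (n + 1)}
    (hb : IsLeast {v | l ≤ (u.symm v : ℕ)} b) (p : Fin (n + 1)) (hp : (p : ℕ) = l) :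
    u p = b := by
  have hb₁ : l ≤ (u.symm b : ℕ) := hb.1
  refine le_antisymm ?_ (hb.2 (show l ≤ (u.symm (u p) : ℕ) by simp; omega))
  have hmono := (h₂.le_iff_le (show l ≤ (p : ℕ) by omega) hb₁).2
  rw [u.apply_symm_apply] at hmono
  exact hmono (by rw [Fin.le_def]; omega)

end Grassmannian

section RsetA

variable {n : ℕ} {w : Perm (Fin (n + 1))} {d : Fin n}

theorem isGreatest_compl_RsetA : IsGreatest (RsetA n w d)ᶜ (w d.castSucc) := by
  refine ⟨?_, fun v hv => not_lt.1 fun hav => hv (Or.inr hav)⟩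
  rintro (⟨⟨_, hlt⟩, _⟩ | hlt) <;> exact lt_irrefl (w d.castSucc) hlt

theorem isLeast_RsetA (hd : IsDescentA n w d) : IsLeast (RsetA n w d) (w d.succ) := by
  refine ⟨Or.inl ⟨⟨le_rfl, hd⟩, d.succ, by simp, rfl⟩, ?_⟩
  rintro v (⟨⟨hle, _⟩, _⟩ | hgt)
  · exact hle
  · exact (hd.trans hgt).le

theorem symm_lt_symm_of_mem_RsetA_of_not_mem {x y : Fin (n + 1)} (hy : y ∈ RsetA n w d)
    (hx : x ∉ RsetA n w d) (hyx : y < x) : w.symm x < w.symm y := by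
  have hxa : x ≤ w d.castSucc := isGreatest_compl_RsetA.2 hx
  rcases hy with ⟨⟨hby, -⟩, j, hdj, rfl⟩ | hay
  · rw [w.symm_apply_apply, Fin.lt_def]
    rcases hxa.lt_or_eq with hxa | rfl
    · have hxd : ((w.symm x : Fin (n + 1)) : ℕ) ≤ d := by
        by_contra h
        exact hx <| Or.inl
          ⟨⟨hby.trans hyx.le, hxa⟩, w.symm x, not_le.1 h, w.apply_symm_apply x⟩
      exact hxd.trans_lt hdj
    · simpa using hdj
  · exact absurd (Or.inr (hay.trans hyx)) hx

end RsetA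

theorem wd_properties_A_general (n : ℕ) (w : Equiv.Perm (Fin (n + 1)))
    (d : Fin n) (hd : IsDescentA n w d)
    (u : Equiv.Perm (Fin (n + 1))) (hu : IsWdA n w d u) :
    invSetA n u ⊆ invSetA n w ∧
    (∃! d' : Fin n, IsDescentA n u d') ∧
    (∀ d' : Fin n, IsDescentA n u d' →
      (d' : ℕ) + 1 = n + 1 - (RsetA n w d).ncard ∧
      u * Equiv.swap d'.castSucc d'.succ * u⁻¹
        = Equiv.swap (w d.castSucc) (w d.succ) ∧
      Equiv.swap (w d.castSucc) (w d.succ)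
        = w * Equiv.swap d.castSucc d.succ * w⁻¹) := by
  obtain ⟨h₁, h₂, h₃⟩ := hu
  set l := n + 1 - (RsetA n w d).ncard
  have hR : RsetA n w d = {v | l ≤ (u.symm v : ℕ)} := by
    rw [← h₃, Equiv.image_eq_preimage_symm]; rfl
  have hRc : (RsetA n w d)ᶜ = {v | (u.symm v : ℕ) < l} := by
    rw [hR]; ext; simp
  have hmax : IsGreatest {v | (u.symm v : ℕ) < l} (w d.castSucc) :=
    hRc ▸ isGreatest_compl_RsetA
  have hmin : IsLeast {v | l ≤ (u.symm v : ℕ)} (w d.succ) := hR ▸ isLeast_RsetA hd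
  have ha₁ : (u.symm (w d.castSucc) : ℕ) < l := hmax.1
  have hb₁ : l ≤ (u.symm (w d.succ) : ℕ) := hmin.1
  have hbn := (u.symm (w d.succ)).isLt
  let dl : Fin n := ⟨l - 1, by omega⟩
  have hua : u dl.castSucc = w d.castSucc :=
    apply_eq_of_isGreatest h₁ hmax _ (show l - 1 + 1 = l by omega)
  have hub : u dl.succ = w d.succ :=
    apply_eq_of_isLeast h₂ hmin _ (show l - 1 + 1 = l by omega)
  have hdesc : ∀ d', IsDescentA n u d' ↔ d' = dl := fun d' =>
    ⟨fun h => Fin.ext <| by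
      have := succ_eq_of_isDescentA h₁ h₂ h; show (d' : ℕ) = l - 1; omega,
      by rintro rfl; rw [IsDescentA, hua, hub]; exact hd⟩
  refine ⟨?_, ⟨dl, (hdesc dl).2 rfl, fun d' h => (hdesc d').1 h⟩, fun d' h => ?_⟩
  · rintro ⟨x, y⟩ hxy
    obtain ⟨hx, hy⟩ := symm_lt_and_le_symm_of_mem_invSetA h₁ h₂ hxy
    exact ⟨hxy.1, symm_lt_symm_of_mem_RsetA_of_not_mem (by rw [hR]; exact hy)
      (by rw [← Set.mem_compl_iff, hRc]; exact hx) hxy.1⟩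
  · obtain rfl := (hdesc d').1 h
    exact ⟨succ_eq_of_isDescentA h₁ h₂ h, by rw [← Equiv.swap_apply_apply, hua, hub],
      Equiv.swap_apply_apply _ _ _⟩

/-- Let `w ∈ 𝔖_{n+1}`, let `d` be a descent of `w`, and let `w_d` be the permutation attached
to `d` as in the canonical join representation (with `l_d = n+1−#R_d`).  Then:
(1) `inv(w_d) ⊆ inv(w)`, i.e. `w_d ≤ w` in the right weak order;
(2) `w_d` has exactly one descent, namely `l_d`;
(3) `w_d s_{l_d} w_d⁻¹` is the transposition `(a_d b_d)`, which equals `w s_d w⁻¹`.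
(A 0-indexed descent position `d'` corresponds to the 1-indexed position `d' + 1`.) -/
theorem wd_properties_A (n : ℕ) (hn : 1 ≤ n) (w : Equiv.Perm (Fin (n + 1)))
    (d : Fin n) (hd : IsDescentA n w d)
    (u : Equiv.Perm (Fin (n + 1))) (hu : IsWdA n w d u) :
    invSetA n u ⊆ invSetA n w ∧
    (∃! d' : Fin n, IsDescentA n u d') ∧
    (∀ d' : Fin n, IsDescentA n u d' →
      (d' : ℕ) + 1 = n + 1 - (RsetA n w d).ncard ∧
      u * Equiv.swap d'.castSucc d'.succ * u⁻¹
        = Equiv.swap (w d.castSucc) (w d.succ) ∧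
      Equiv.swap (w d.castSucc) (w d.succ)
        = w * Equiv.swap d.castSucc d.succ * w⁻¹) :=
  wd_properties_A_general n w d hd u hu
end

section
/- Let w ∈ 𝔖_{n+1} have exactly one descent, at position l, and set a = w(l), b = w(l+1). Define Γ(w) = {(i,j) ∈ ℤ×ℤ : l ≤ j ≤ n, j−l+1 ≤ i ≤ j, and w(j+1) ≤ i}, and Γ₁(w) = {(i,j) ∈ Γ(w) : (i, j+1) ∉ Γ(w)} (note that pairs whose second coordinate exceeds n are never in Γ(w)). Then the map (i,j) ↦ i is a bijection from Γ₁(w) onto the interval {b, b+1, …, a−1}. -/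
/-- The value `w(p)` of `w ∈ 𝔖_{n+1}` at a 1-indexed position `p ∈ {1,…,n+1}`, as an
integer in `{1,…,n+1}` (`w` is extended by the identity outside this range). -/
def permValA (n : ℕ) (w : Equiv.Perm (Fin (n + 1))) (p : ℤ) : ℤ :=
  if h : 1 ≤ p ∧ p ≤ (n : ℤ) + 1 then
    ((w ⟨(p - 1).toNat, by omega⟩ : Fin (n + 1)) : ℤ) + 1
  else p

/-- `Γ(w) = {(i,j) ∈ ℤ×ℤ : l ≤ j ≤ n, j−l+1 ≤ i ≤ j, w(j+1) ≤ i}`, where `l` is the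
(1-indexed) unique descent position of `w`. -/
def GammaA (n : ℕ) (w : Equiv.Perm (Fin (n + 1))) (l : ℤ) : Set (ℤ × ℤ) :=
  {p | l ≤ p.2 ∧ p.2 ≤ (n : ℤ) ∧ p.2 - l + 1 ≤ p.1 ∧ p.1 ≤ p.2 ∧
    permValA n w (p.2 + 1) ≤ p.1}

/-- `Γ₁(w) = {(i,j) ∈ Γ(w) : (i, j+1) ∉ Γ(w)}`. -/
def GammaOneA (n : ℕ) (w : Equiv.Perm (Fin (n + 1))) (l : ℤ) : Set (ℤ × ℤ) :=
  {p ∈ GammaA n w l | (p.1, p.2 + 1) ∉ GammaA n w l}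

/-!
Write `v(p)` for the value of `w` at position `p`. As `l` is the only descent, `v` increases on
`[1, l]` and on `[l + 1, n + 1]`, so every fibre `{j | (i, j) ∈ Γ(w)}` is an interval and `Γ₁(w)`
consists of the tops of the nonempty fibres: `(i, j) ↦ i` maps `Γ₁(w)` bijectively onto the
projection of `Γ(w)`. A pigeonhole count shows that for `l ≤ i ≤ n` one has `v(i + 1) ≤ i` exactly
when `i < v(l) = a`, which identifies this projection with `[b, a - 1]`.
-/

open Set Function

theorem bijOn_fst_of_ordConnected_fibers {S : Set (ℤ × ℤ)}
    (hconn : ∀ i, (Prod.mk i ⁻¹' S).OrdConnected) (hbdd : ∀ i, BddAbove (Prod.mk i ⁻¹' S)) :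
    BijOn Prod.fst {p ∈ S | (p.1, p.2 + 1) ∉ S} (Prod.fst '' S) := by
  refine ⟨fun p hp => mem_image_of_mem _ hp.1, ?_, ?_⟩
  · rintro ⟨i, j⟩ ⟨hj, hj1⟩ ⟨i', j'⟩ ⟨hj', hj'1⟩ (rfl : i = i')
    have top_le : ∀ {j j'}, (i, j) ∈ S → (i, j') ∈ S → (i, j + 1) ∉ S → j' ≤ j :=
      fun hj hj' hj1 => not_lt.1 fun hlt => hj1 ((hconn i).out hj hj' ⟨by omega, by omega⟩)
    rw [le_antisymm (top_le hj' hj hj'1) (top_le hj hj' hj1)]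
  · rintro _ ⟨⟨i, j⟩, hj, rfl⟩
    obtain ⟨m, hm, hmax⟩ := (hbdd i).exists_isGreatest_of_nonempty ⟨j, hj⟩
    exact ⟨(i, m), ⟨hm, fun h => by have := hmax h; omega⟩, rfl⟩

theorem Int.monotoneOn_Icc_of_le_add_one {β : Type*} [Preorder β] {f : ℤ → β} {x y : ℤ}
    (hf : ∀ p ∈ Ico x y, f p ≤ f (p + 1)) : MonotoneOn f (Icc x y) :=
  monotoneOn_of_le_succ ordConnected_Icc fun p _ hp hp1 => by
    rw [Order.succ_eq_add_one] at hp1 ⊢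
    exact hf p ⟨hp.1, by linarith [hp1.2]⟩

section Pigeonhole

variable {v : ℤ → ℤ} {l N : ℤ}

theorem card_le_of_injective_of_mapsTo_Icc (hv : Injective v) {s : Finset ℤ} {x y : ℤ}
    (h : ∀ p ∈ s, v p ∈ Finset.Icc x y) : s.card ≤ (y + 1 - x).toNat :=
  Int.card_Icc x y ▸ Finset.card_le_card_of_injOn v h hv.injOn

theorem le_apply_of_monotoneOn (hv : Injective v) (hpos : ∀ p ∈ Icc 1 l, 1 ≤ v p)
    (hmono : MonotoneOn v (Icc 1 l)) (hl : 1 ≤ l) : l ≤ v l := by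
  have hcard := card_le_of_injective_of_mapsTo_Icc (s := Finset.Icc 1 l) hv fun p hp => by
    rw [Finset.mem_Icc] at hp ⊢
    exact ⟨hpos p hp, hmono hp ⟨hl, le_rfl⟩ hp.2⟩
  rw [Int.card_Icc] at hcard
  omega

theorem apply_add_one_le_iff (hv : Injective v) (hmaps : MapsTo v (Icc 1 N) (Icc 1 N))
    (h₁ : MonotoneOn v (Icc 1 l)) (h₂ : MonotoneOn v (Icc (l + 1) N)) {i : ℤ}
    (hl : 1 ≤ l) (hli : l ≤ i) (hiN : i < N) : v (i + 1) ≤ i ↔ i < v l := by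
  constructor
  · intro hle
    by_contra! hvl
    have hcard := card_le_of_injective_of_mapsTo_Icc (s := Finset.Icc 1 (i + 1)) (x := 1) (y := i)
      hv fun p hp => by
        rw [Finset.mem_Icc] at hp ⊢
        refine ⟨(hmaps ⟨hp.1, by omega⟩).1, ?_⟩
        rcases le_or_gt p l with hpl | hpl
        · exact (h₁ ⟨hp.1, hpl⟩ ⟨by omega, le_rfl⟩ hpl).trans hvl
        · exact (h₂ ⟨by omega, by omega⟩ ⟨by omega, by omega⟩ hp.2).trans hle
    rw [Int.card_Icc] at hcard
    omega
  · intro hlt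
    by_contra! hgt
    have hcard := card_le_of_injective_of_mapsTo_Icc (s := insert l (Finset.Icc (i + 1) N))
      (x := i + 1) (y := N) hv fun p hp => by
        rw [Finset.mem_insert, Finset.mem_Icc] at hp
        rw [Finset.mem_Icc]
        rcases hp with rfl | hp
        · exact ⟨hlt, (hmaps ⟨by omega, by omega⟩).2⟩
        · exact ⟨hgt.trans_le (h₂ ⟨by omega, by omega⟩ ⟨by omega, hp.2⟩ hp.1),
            (hmaps ⟨by omega, hp.2⟩).2⟩
    rw [Finset.card_insert_of_notMem (by simp; omega), Int.card_Icc] at hcard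
    omega

end Pigeonhole

section Permutation

variable {n : ℕ} {w : Equiv.Perm (Fin (n + 1))}

theorem permValA_natCast_add_one (x : Fin (n + 1)) :
    permValA n w ((x : ℕ) + 1) = ((w x : ℕ) : ℤ) + 1 := by
  rw [permValA, dif_pos ⟨by omega, by omega⟩]
  simp

theorem exists_fin_natCast_add_one_eq {p : ℤ} (hp : p ∈ Icc 1 ((n : ℤ) + 1)) :
    ∃ x : Fin (n + 1), ((x : ℕ) : ℤ) + 1 = p := by
  obtain ⟨h1, h2⟩ := hp
  exact ⟨⟨(p - 1).toNat, by omega⟩, by simp; omega⟩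

theorem permValA_mem_Icc {p : ℤ} (hp : p ∈ Icc 1 ((n : ℤ) + 1)) :
    permValA n w p ∈ Icc 1 ((n : ℤ) + 1) := by
  obtain ⟨x, rfl⟩ := exists_fin_natCast_add_one_eq hp
  rw [permValA_natCast_add_one]
  have := (w x).isLt
  constructor <;> omega

variable (n w) in
theorem permValA_injective : Injective (permValA n w) := by
  have outside {p : ℤ} (hp : p ∉ Icc 1 ((n : ℤ) + 1)) : permValA n w p = p := dif_neg hp
  intro p q h
  by_cases hp : p ∈ Icc 1 ((n : ℤ) + 1) <;> by_cases hq : q ∈ Icc 1 ((n : ℤ) + 1)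
  · obtain ⟨x, rfl⟩ := exists_fin_natCast_add_one_eq hp
    obtain ⟨y, rfl⟩ := exists_fin_natCast_add_one_eq hq
    rw [permValA_natCast_add_one, permValA_natCast_add_one] at h
    rw [w.injective (Fin.ext (by omega) : w x = w y)]
  · exact absurd (outside hq ▸ h ▸ permValA_mem_Icc hp) hq
  · exact absurd (outside hp ▸ h.symm ▸ permValA_mem_Icc hq) hp
  · rwa [outside hp, outside hq] at h

theorem monotoneOn_permValA {x y : ℤ} (hx : 1 ≤ x) (hy : y ≤ (n : ℤ) + 1)
    (hno_descent : ∀ k : Fin n, ((k : ℕ) : ℤ) + 1 ∈ Ico x y → ¬ IsDescentA n w k) :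
    MonotoneOn (permValA n w) (Icc x y) :=
  Int.monotoneOn_Icc_of_le_add_one fun p ⟨hxp, hpy⟩ => by
    set k : Fin n := ⟨(p - 1).toNat, by omega⟩
    have hp : p = ((k.castSucc : ℕ) : ℤ) + 1 := by simp [k]; omega
    have hp1 : p + 1 = ((k.succ : ℕ) : ℤ) + 1 := by simp [k]; omega
    have hwk : w k.castSucc ≤ w k.succ := not_lt.1 (hno_descent k (by simp [k]; omega))
    rw [hp1, hp, permValA_natCast_add_one, permValA_natCast_add_one]
    simpa using hwk

end Permutation

section Gamma

variable {n : ℕ} {w : Equiv.Perm (Fin (n + 1))} {l : ℤ}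

theorem ordConnected_gammaA_fiber (h₂ : MonotoneOn (permValA n w) (Icc (l + 1) ((n : ℤ) + 1)))
    (i : ℤ) : (Prod.mk i ⁻¹' GammaA n w l).OrdConnected := by
  refine ⟨fun j ⟨hlj, _, _, hij, _⟩ j' ⟨_, hjn, hij', _, hvj'⟩ k hk => ?_⟩
  obtain ⟨hjk, hkj'⟩ := hk
  exact ⟨by omega, by omega, by omega, by omega,
    (h₂ ⟨by omega, by omega⟩ ⟨by omega, by omega⟩ (by omega)).trans hvj'⟩

theorem bddAbove_gammaA_fiber (i : ℤ) : BddAbove (Prod.mk i ⁻¹' GammaA n w l) :=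
  ⟨n, fun _ hj => hj.2.1⟩

theorem image_fst_gammaA (h₁ : MonotoneOn (permValA n w) (Icc 1 l))
    (h₂ : MonotoneOn (permValA n w) (Icc (l + 1) ((n : ℤ) + 1))) (hl : 1 ≤ l) (hln : l ≤ n) :
    Prod.fst '' GammaA n w l = Icc (permValA n w (l + 1)) (permValA n w l - 1) := by
  have hmaps : MapsTo (permValA n w) (Icc 1 ((n : ℤ) + 1)) (Icc 1 ((n : ℤ) + 1)) :=
    fun _ => permValA_mem_Icc
  have hla : l ≤ permValA n w l := le_apply_of_monotoneOn (permValA_injective n w)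
    (fun p hp => (hmaps ⟨hp.1, by linarith [hp.2]⟩).1) h₁ hl
  have key {i : ℤ} : l ≤ i → i < n + 1 → (permValA n w (i + 1) ≤ i ↔ i < permValA n w l) :=
    apply_add_one_le_iff (permValA_injective n w) hmaps h₁ h₂ hl
  ext i
  constructor
  · rintro ⟨⟨i, j⟩, ⟨hlj, hjn, _, hij, hvj⟩, rfl⟩
    refine ⟨(h₂ ⟨le_rfl, by omega⟩ ⟨by omega, by omega⟩ (by omega)).trans hvj, ?_⟩
    rcases lt_or_ge i l with hil | hli
    · omega
    · have := (key hli (by omega)).1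
        ((h₂ ⟨by omega, by omega⟩ ⟨by omega, by omega⟩ (by omega)).trans hvj)
      omega
  · rintro ⟨hbi, hia⟩
    have hb : 1 ≤ permValA n w (l + 1) := (hmaps ⟨by omega, by omega⟩).1
    have ha : permValA n w l ≤ n + 1 := (hmaps ⟨hl, by omega⟩).2
    rcases le_or_gt i l with hil | hli
    · exact ⟨(i, l), ⟨le_rfl, hln, by omega, hil, hbi⟩, rfl⟩
    · exact ⟨(i, i), ⟨by omega, by omega, by omega, le_rfl, (key hli.le (by omega)).2 (by omega)⟩,
        rfl⟩

end Gamma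

theorem gammaOne_bijOn_A_general (n : ℕ) (w : Equiv.Perm (Fin (n + 1)))
    (d : Fin n) (hd' : ∀ d', IsDescentA n w d' → d' = d)
    (l a b : ℤ)
    (hl : l = (d : ℕ) + 1)
    (ha : a = ((w d.castSucc : ℕ) : ℤ) + 1)
    (hb : b = ((w d.succ : ℕ) : ℤ) + 1) :
    Set.BijOn Prod.fst (GammaOneA n w l) (Set.Icc b (a - 1)) := by
  have hno_descent {x y : ℤ} (hxy : l ∉ Ico x y) (k : Fin n) (hk : ((k : ℕ) : ℤ) + 1 ∈ Ico x y) :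
      ¬ IsDescentA n w k :=
    fun hdk => hxy (hl ▸ hd' k hdk ▸ hk)
  have h₁ : MonotoneOn (permValA n w) (Icc 1 l) :=
    monotoneOn_permValA le_rfl (by omega) (hno_descent fun h => h.2.false)
  have h₂ : MonotoneOn (permValA n w) (Icc (l + 1) ((n : ℤ) + 1)) :=
    monotoneOn_permValA (by omega) le_rfl (hno_descent fun h => by linarith [h.1])
  have ha' : a = permValA n w l := by rw [ha, hl, ← permValA_natCast_add_one]; rfl
  have hb' : b = permValA n w (l + 1) := by
    rw [hb, hl, ← permValA_natCast_add_one, Fin.val_succ]; push_cast; rfl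
  rw [ha', hb', ← image_fst_gammaA h₁ h₂ (by omega) (by omega)]
  exact bijOn_fst_of_ordConnected_fibers (ordConnected_gammaA_fiber h₂) bddAbove_gammaA_fiber

/-- Let `w ∈ 𝔖_{n+1}` have exactly one descent, at position `l`, and set `a = w(l)`,
`b = w(l+1)`.  Then the map `(i,j) ↦ i` is a bijection from `Γ₁(w)` onto `{b,…,a−1}`.
(The 0-indexed descent `d : Fin n` corresponds to the 1-indexed position `l = d+1`;
`a` and `b` are the 1-indexed values `w(l)` and `w(l+1)`.) -/
theorem gammaOne_bijOn_A (n : ℕ) (hn : 1 ≤ n) (w : Equiv.Perm (Fin (n + 1)))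
    (d : Fin n) (hd : IsDescentA n w d) (hd' : ∀ d', IsDescentA n w d' → d' = d)
    (l a b : ℤ)
    (hl : l = (d : ℕ) + 1)
    (ha : a = ((w d.castSucc : ℕ) : ℤ) + 1)
    (hb : b = ((w d.succ : ℕ) : ℤ) + 1) :
    Set.BijOn Prod.fst (GammaOneA n w l) (Set.Icc b (a - 1)) :=
  gammaOne_bijOn_A_general n w d hd' l a b hl ha hb
end

section
/- Let u, w ∈ W(D_n) each have exactly one descent, at l_u and l_w respectively. If u({|l_u|+1,…,n}) = w({|l_w|+1,…,n}), then u = w. (That is, the map sending a join-irreducible element w of type l to the set R(w) = w({|l|+1,…,n}) is injective.) -/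
/-- An element of the Coxeter group `W(D_n)`, modelled as a permutation of `ℤ` fixing
everything outside `{±1,…,±n}`, with `w(−i) = −w(i)` and an even number of
`i ∈ {1,…,n}` with `w(i) < 0`. -/
def IsDPerm (n : ℕ) (w : Equiv.Perm ℤ) : Prop :=
  (∀ i : ℤ, ¬(1 ≤ |i| ∧ |i| ≤ (n : ℤ)) → w i = i) ∧
  (∀ i : ℤ, w (-i) = -(w i)) ∧
  Even ((Finset.Icc (1 : ℤ) (n : ℤ)).filter (fun i => w i < 0)).card

/-- `l` is a descent of `w ∈ W(D_n)`: `l ∈ {−1} ∪ {1,…,n−1}` and `w(l) > w(|l|+1)`. -/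
def IsDescentD (n : ℕ) (w : Equiv.Perm ℤ) (l : ℤ) : Prop :=
  (l = -1 ∨ (1 ≤ l ∧ l ≤ (n : ℤ) - 1)) ∧ w (|l| + 1) < w l

/-- The inversion set of `w ∈ W(D_n)`:
`inv(w) = {(a,b) : a,b ∈ {±1,…,±n}, a > |b|, w⁻¹(a) < w⁻¹(b)}`. -/
def invSetD (n : ℕ) (w : Equiv.Perm ℤ) : Set (ℤ × ℤ) :=
  {p | (1 ≤ |p.1| ∧ |p.1| ≤ (n : ℤ)) ∧ (1 ≤ |p.2| ∧ |p.2| ≤ (n : ℤ)) ∧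
    |p.2| < p.1 ∧ w.symm p.1 < w.symm p.2}

/-- The right weak order on `W(D_n)`: `u ≤ w` iff `inv(u) ⊆ inv(w)`. -/
def weakLED (n : ℕ) (u w : Equiv.Perm ℤ) : Prop :=
  invSetD n u ⊆ invSetD n w

/-- `w` is a least upper bound of `S ⊆ W(D_n)` in the right weak order on `W(D_n)`. -/
def IsWeakLUBD (n : ℕ) (S : Set (Equiv.Perm ℤ)) (w : Equiv.Perm ℤ) : Prop :=
  (∀ x ∈ S, weakLED n x w) ∧ ∀ z, IsDPerm n z → (∀ x ∈ S, weakLED n x z) → weakLED n w z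

/-- `w` is join-irreducible in the right weak order on `W(D_n)`. -/
def IsJoinIrreducibleD (n : ℕ) (w : Equiv.Perm ℤ) : Prop :=
  w ≠ 1 ∧ ∀ u v, IsDPerm n u → IsDPerm n v → IsWeakLUBD n {u, v} w → u = w ∨ v = w

/-!
Write `m = |l|`. Having no descent in `{m+1, …, n-1}`, `w` is increasing on `{m+1, …, n}`, so
`R(w)` determines `m` (by its size) and `w` on that interval. On `{1, …, m}` the absolute values
`|w i|` increase as well (this uses `w(-1) < w(2)` when `l ≠ -1`) and fill the complement of
`|R(w)|` in `{1, …, n}`, so they are determined too; moreover `w i > 0` for `2 ≤ i ≤ m`.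
The sign of `w 1` is then forced by the parity condition defining `W(D_n)`.
-/

open Set

theorem StrictMonoOn.eqOn_of_image_eq {α β : Type*} [LinearOrder α] [Preorder β] {s : Set α}
    [WellFoundedLT s] {f g : α → β} (hf : StrictMonoOn f s) (hg : StrictMonoOn g s)
    (h : f '' s = g '' s) : EqOn f g s := by
  have := (hf.strictMono.range_inj hg.strictMono).1 (by rwa [range_comp, range_comp,
    Subtype.range_coe])
  exact fun x hx => congrFun this ⟨x, hx⟩

namespace IsDPerm

variable {n : ℕ} {u w : Equiv.Perm ℤ} {i : ℤ}

theorem map_zero (hw : IsDPerm n w) : w 0 = 0 := by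
  have h := hw.2.1 0
  rw [neg_zero] at h
  omega

theorem abs_apply_abs (hw : IsDPerm n w) (i : ℤ) : |w (|i|)| = |w i| := by
  rcases abs_choice i with h | h <;> rw [h]
  rw [hw.2.1, abs_neg]

theorem abs_apply_mem_Icc_iff (hw : IsDPerm n w) :
    |w i| ∈ Icc 1 (n : ℤ) ↔ |i| ∈ Icc 1 (n : ℤ) := by
  constructor
  · intro h
    by_contra hi
    rw [hw.1 i hi] at h
    exact hi h
  · intro hi
    by_contra h
    rw [w.injective (hw.1 (w i) h)] at h
    exact h hi

theorem injOn_abs_apply (hw : IsDPerm n w) : InjOn (fun i => |w i|) (Ici 0) := by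
  intro i hi j hj h
  rcases abs_eq_abs.1 h with h | h
  · exact w.injective h
  · rw [← hw.2.1] at h
    have := w.injective h
    simp only [mem_Ici] at hi hj
    omega

theorem bijOn_abs_apply (hw : IsDPerm n w) :
    BijOn (fun i => |w i|) (Icc 1 (n : ℤ)) (Icc 1 (n : ℤ)) := by
  refine ⟨fun i hi => ?_, (injOn_abs_apply hw).mono fun i hi => le_trans zero_le_one hi.1, ?_⟩
  · rw [hw.abs_apply_mem_Icc_iff, abs_of_pos (by exact hi.1)]
    exact hi
  · intro j hj
    have hk : |w.symm j| ∈ Icc 1 (n : ℤ) := by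
      rwa [← hw.abs_apply_mem_Icc_iff, Equiv.apply_symm_apply, abs_of_pos (by exact hj.1)]
    refine ⟨|w.symm j|, hk, ?_⟩
    simp only
    rw [hw.abs_apply_abs, Equiv.apply_symm_apply, abs_of_pos (by exact hj.1)]

theorem abs_image_Icc_one (hw : IsDPerm n w) {m : ℤ} (hm0 : 0 ≤ m) (hm : m ≤ n) :
    (fun i => |w i|) '' Icc 1 m = Icc 1 (n : ℤ) \ (fun i => |w i|) '' Icc (m + 1) n := by
  have hsplit : Icc 1 m = Icc 1 (n : ℤ) \ Icc (m + 1) n := by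
    ext i
    simp only [mem_Icc, mem_sdiff]
    omega
  rw [hsplit, hw.bijOn_abs_apply.injOn.image_sdiff_subset (Icc_subset_Icc_left (by omega)),
    hw.bijOn_abs_apply.image_eq]

theorem ext_of_eqOn (hu : IsDPerm n u) (hw : IsDPerm n w) (h : EqOn u w (Icc 1 n)) :
    u = w := by
  ext i
  by_cases hi : |i| ∈ Icc 1 (n : ℤ)
  · rcases abs_choice i with hi' | hi'
    · rw [← hi']
      exact h hi
    · rw [← neg_neg i, hu.2.1, hw.2.1, ← hi', h hi]
  · rw [hu.1 i hi, hw.1 i hi]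

theorem apply_one_neg_iff (hn : 1 ≤ n) (hw : IsDPerm n w) :
    w 1 < 0 ↔ Odd ((Finset.Icc 2 (n : ℤ)).filter (w · < 0)).card := by
  have heven := hw.2.2
  rw [← Finset.insert_Icc_add_one_left_eq_Icc (by exact_mod_cast hn), Finset.filter_insert,
    one_add_one_eq_two] at heven
  split_ifs at heven with h1
  · rw [Finset.card_insert_of_notMem (by simp), Nat.even_add_one, Nat.not_even_iff_odd] at heven
    simpa [h1]
  · simpa [h1] using heven

theorem eq_of_eqOn_Icc_two (hu : IsDPerm n u) (hw : IsDPerm n w) (h : EqOn u w (Icc 2 n)) :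
    u = w := by
  refine ext_of_eqOn hu hw fun i hi => ?_
  rcases (eq_or_lt_of_le hi.1).symm with hi1 | rfl
  · exact h ⟨hi1, hi.2⟩
  -- `|u 1|` is the one value in `{1, …, n}` missed by `|u|` on `{2, …, n}`
  have habs : |u 1| = |w 1| := by
    have himg_u := hu.abs_image_Icc_one zero_le_one hi.2
    have himg_w := hw.abs_image_Icc_one zero_le_one hi.2
    have hrest : (fun i => |u i|) '' Icc 2 n = (fun i => |w i|) '' Icc 2 n :=
      image_congr fun i hi => by rw [h hi]
    rw [one_add_one_eq_two] at himg_u himg_w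
    rw [hrest, ← himg_w, Icc_self, image_singleton, image_singleton] at himg_u
    exact singleton_eq_singleton_iff.1 himg_u
  have hsign : u 1 < 0 ↔ w 1 < 0 := by
    have hn : 1 ≤ n := by exact_mod_cast hi.2
    rw [hu.apply_one_neg_iff hn, hw.apply_one_neg_iff hn,
      Finset.filter_congr fun i hi => by rw [h (by simpa using hi)]]
  have hu0 : u 1 ≠ 0 := fun h0 => one_ne_zero (u.injective (h0.trans hu.map_zero.symm))
  rcases abs_eq_abs.1 habs with h1 | h1
  · exact h1
  · omega

end IsDPerm

section UniqueDescent

variable {n : ℕ} {w : Equiv.Perm ℤ} {l : ℤ}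

theorem IsDescentD.abs_mem_Icc (hw : IsDPerm n w) (hl : IsDescentD n w l) :
    |l| ∈ Icc 1 ((n : ℤ) - 1) := by
  rcases hl with ⟨rfl | hl, hlt⟩
  · rw [abs_neg, abs_one, one_add_one_eq_two] at hlt
    rw [abs_neg, abs_one]
    refine ⟨le_rfl, ?_⟩
    by_contra hn
    rw [hw.1 2 (by simp; omega)] at hlt
    -- `w (-1)` leaves `{±1, …, ±n}`, hence so does `-1`, which is then fixed by `w`
    have hout : |(-1 : ℤ)| ∉ Icc 1 (n : ℤ) := by
      rw [← hw.abs_apply_mem_Icc_iff, mem_Icc, abs_of_pos (by omega)]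
      omega
    rw [hw.1 _ hout] at hlt
    omega
  · rwa [abs_of_pos hl.1]

theorem apply_lt_apply_add_one_of_ne (hl' : ∀ l', IsDescentD n w l' → l' = l) {i : ℤ}
    (hi : i ∈ Icc 1 ((n : ℤ) - 1)) (hne : i ≠ l) : w i < w (i + 1) := by
  refine lt_of_le_of_ne (not_lt.1 fun h => hne (hl' i ⟨Or.inr hi, ?_⟩))
    (w.injective.ne (by omega))
  rwa [abs_of_pos hi.1]

theorem apply_neg_one_lt_apply_two (hl' : ∀ l', IsDescentD n w l' → l' = l) (hne : l ≠ -1) :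
    w (-1) < w 2 :=
  lt_of_le_of_ne (not_lt.1 fun h => hne (hl' (-1) ⟨Or.inl rfl, h⟩).symm)
    (w.injective.ne (by omega))

theorem strictMonoOn_Icc_abs_add_one (hl' : ∀ l', IsDescentD n w l' → l' = l) :
    StrictMonoOn w (Icc (|l| + 1) n) :=
  strictMonoOn_of_lt_add_one ordConnected_Icc fun a _ ha ha1 =>
    apply_lt_apply_add_one_of_ne hl' ⟨by grind [abs_nonneg l], by grind⟩
      (by grind [le_abs_self l])

theorem strictMonoOn_Icc_one_abs (hl : IsDescentD n w l)
    (hl' : ∀ l', IsDescentD n w l' → l' = l) : StrictMonoOn w (Icc 1 |l|) := by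
  refine strictMonoOn_of_lt_add_one ordConnected_Icc fun a _ ha ha1 => ?_
  simp only [mem_Icc] at ha ha1
  rcases hl.1 with rfl | hl1
  · simp at ha1
    omega
  · rw [abs_of_pos hl1.1] at ha ha1
    exact apply_lt_apply_add_one_of_ne hl' ⟨ha.1, by omega⟩ (by omega)

theorem abs_apply_one_lt (hw : IsDPerm n w) (hl : IsDescentD n w l)
    (hl' : ∀ l', IsDescentD n w l' → l' = l) {i : ℤ} (hi : i ∈ Icc 2 |l|) : |w 1| < w i := by
  have hmono := strictMonoOn_Icc_one_abs hl hl'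
  have h2 : w 2 ≤ w i := hmono.monotoneOn ⟨one_le_two, hi.1.trans hi.2⟩ ⟨by grind, hi.2⟩ hi.1
  have hne : l ≠ -1 := by
    rintro rfl
    simp at hi
  have hneg := apply_neg_one_lt_apply_two hl' hne
  rw [hw.2.1] at hneg
  exact abs_lt.2 ⟨by linarith, hmono ⟨le_rfl, by grind⟩ ⟨by grind, hi.2⟩ (by grind)⟩

theorem apply_pos_of_mem_Icc_two (hw : IsDPerm n w) (hl : IsDescentD n w l)
    (hl' : ∀ l', IsDescentD n w l' → l' = l) {i : ℤ} (hi : i ∈ Icc 2 |l|) : 0 < w i :=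
  (abs_nonneg _).trans_lt (abs_apply_one_lt hw hl hl' hi)

theorem strictMonoOn_abs_apply_Icc_one_abs (hw : IsDPerm n w) (hl : IsDescentD n w l)
    (hl' : ∀ l', IsDescentD n w l' → l' = l) :
    StrictMonoOn (fun i => |w i|) (Icc 1 |l|) := by
  intro i hi j hj hij
  have hj2 : j ∈ Icc 2 |l| := ⟨by grind, hj.2⟩
  simp only
  rw [abs_of_pos (apply_pos_of_mem_Icc_two hw hl hl' hj2)]
  rcases eq_or_lt_of_le hi.1 with rfl | hi1
  · exact abs_apply_one_lt hw hl hl' hj2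
  · rw [abs_of_pos (apply_pos_of_mem_Icc_two hw hl hl' ⟨hi1, hi.2⟩)]
    exact strictMonoOn_Icc_one_abs hl hl' hi hj hij

end UniqueDescent

theorem joinIrreducibleD_R_injective_general (n : ℕ)
    (u w : Equiv.Perm ℤ) (hu : IsDPerm n u) (hw : IsDPerm n w) (lu lw : ℤ)
    (hlu : IsDescentD n u lu) (hlu' : ∀ l', IsDescentD n u l' → l' = lu)
    (hlw : IsDescentD n w lw) (hlw' : ∀ l', IsDescentD n w l' → l' = lw)
    (hR : ⇑u '' Set.Icc (|lu| + 1) (n : ℤ) = ⇑w '' Set.Icc (|lw| + 1) (n : ℤ)) :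
    u = w := by
  obtain ⟨hmu1, hmu2⟩ := hlu.abs_mem_Icc hu
  obtain ⟨hmw1, hmw2⟩ := hlw.abs_mem_Icc hw
  have hm : |lw| = |lu| := by
    have hcard := congrArg ncard hR
    simp only [ncard_image_of_injective _ (Equiv.injective _), ← Finset.coe_Icc,
      ncard_coe_finset, Int.card_Icc] at hcard
    omega
  rw [hm] at hR
  have hhi : EqOn u w (Icc (|lu| + 1) n) :=
    (strictMonoOn_Icc_abs_add_one hlu').eqOn_of_image_eq
      (hm ▸ strictMonoOn_Icc_abs_add_one hlw') hR
  have hlo : EqOn (fun i => |u i|) (fun i => |w i|) (Icc 1 |lu|) := by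
    refine (strictMonoOn_abs_apply_Icc_one_abs hu hlu hlu').eqOn_of_image_eq
      (hm ▸ strictMonoOn_abs_apply_Icc_one_abs hw hlw hlw') ?_
    rw [hu.abs_image_Icc_one (abs_nonneg _) (by omega),
      hw.abs_image_Icc_one (abs_nonneg _) (by omega), image_congr fun i hi => by rw [hhi hi]]
  refine hu.eq_of_eqOn_Icc_two hw fun i hi => ?_
  rcases le_or_gt i |lu| with hil | hil
  · have habs : |u i| = |w i| := hlo ⟨by grind, hil⟩
    rwa [abs_of_pos (apply_pos_of_mem_Icc_two hu hlu hlu' ⟨hi.1, hil⟩),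
      abs_of_pos (apply_pos_of_mem_Icc_two hw hlw hlw' ⟨hi.1, hm ▸ hil⟩)] at habs
  · exact hhi ⟨hil, hi.2⟩

/-- Let `u, w ∈ W(D_n)` each have exactly one descent, at `l_u` and `l_w` respectively.
If `u({|l_u|+1,…,n}) = w({|l_w|+1,…,n})` then `u = w`; that is, the map sending a
join-irreducible element `w` of type `l` to `R(w) = w({|l|+1,…,n})` is injective. -/
theorem joinIrreducibleD_R_injective (n : ℕ) (hn : 4 ≤ n)
    (u w : Equiv.Perm ℤ) (hu : IsDPerm n u) (hw : IsDPerm n w) (lu lw : ℤ)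
    (hlu : IsDescentD n u lu) (hlu' : ∀ l', IsDescentD n u l' → l' = lu)
    (hlw : IsDescentD n w lw) (hlw' : ∀ l', IsDescentD n w l' → l' = lw)
    (hR : ⇑u '' Set.Icc (|lu| + 1) (n : ℤ) = ⇑w '' Set.Icc (|lw| + 1) (n : ℤ)) :
    u = w :=
  joinIrreducibleD_R_injective_general n u w hu hw lu lw hlu hlu' hlw hlw' hR
end

section
/- Let w ∈ W(D_n) have exactly one descent, at l with l ≥ 2. Set a = w(l), b = w(l+1), R = w({l+1,…,n}), r = max{k ≥ 0 : {1,…,k} ⊆ R ∪ (−R)}, and c = w⁻¹(|w(1)|) (equivalently, c = 1 if w(1) > 0 and c = −1 if w(1) < 0) if r ≥ 1, and c = 1 if r = 0. Put V = {b,…,a−1} if b ≥ 2; V = {c} ∪ {2,…,a−1} if b ∈ {1,−1}; and V = ({b+1,…,−2} ∪ {−c}) ∪ ({c} ∪ {2,…,a−1}) if b ≤ −2; here all interval notations exclude 0. Define Γ(w) = {(i,j) : l ≤ j ≤ n−1, i a nonzero integer with j−(n−1)−l ≤ i ≤ j and |i| ≤ n−1, such that: i ≥ w(j+1) if w(j+1)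 ≥ 2; (i ≥ 2 or i = w(j+1)) if w(j+1) ∈ {1,−1}; i ≥ w(j+1)+1 if w(j+1) ≤ −2}. Let Γ₁(w) = {(i,j) ∈ Γ(w) : (i, j+1) ∉ Γ(w)} (pairs with second coordinate ≥ n are never in Γ(w)) and Λ₁(w) = {(i,j) ∈ Γ₁(w) : i ≤ a−1}. Then the map (i,j) ↦ i is a bijection from Λ₁(w) onto V. -/
/-- `Γ(w)` for `w ∈ W(D_n)` with unique descent `l ≥ 2`: the set of pairs `(i,j)` with
`l ≤ j ≤ n−1`, `i` a nonzero integer with `j−(n−1)−l ≤ i ≤ j` and `|i| ≤ n−1`, such that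
`i ≥ w(j+1)` if `w(j+1) ≥ 2`; (`i ≥ 2` or `i = w(j+1)`) if `w(j+1) ∈ {1,−1}`; and
`i ≥ w(j+1)+1` if `w(j+1) ≤ −2`. -/
def GammaD2 (n : ℕ) (w : Equiv.Perm ℤ) (l : ℤ) : Set (ℤ × ℤ) :=
  {p | l ≤ p.2 ∧ p.2 ≤ (n : ℤ) - 1 ∧ p.1 ≠ 0 ∧
    p.2 - ((n : ℤ) - 1) - l ≤ p.1 ∧ p.1 ≤ p.2 ∧ |p.1| ≤ (n : ℤ) - 1 ∧
    ((2 ≤ w (p.2 + 1) ∧ w (p.2 + 1) ≤ p.1) ∨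
      ((w (p.2 + 1) = 1 ∨ w (p.2 + 1) = -1) ∧ (2 ≤ p.1 ∨ p.1 = w (p.2 + 1))) ∨
      (w (p.2 + 1) ≤ -2 ∧ w (p.2 + 1) + 1 ≤ p.1))}

/-- `Γ₁(w) = {(i,j) ∈ Γ(w) : (i, j+1) ∉ Γ(w)}`. -/
def GammaOneD2 (n : ℕ) (w : Equiv.Perm ℤ) (l : ℤ) : Set (ℤ × ℤ) :=
  {p ∈ GammaD2 n w l | (p.1, p.2 + 1) ∉ GammaD2 n w l}

/-- `Λ₁(w) = {(i,j) ∈ Γ₁(w) : i ≤ a−1}`, where `a = w(l)`. -/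
def LambdaOneD2 (n : ℕ) (w : Equiv.Perm ℤ) (l : ℤ) : Set (ℤ × ℤ) :=
  {p ∈ GammaOneD2 n w l | p.1 ≤ w l - 1}

def GammaCond (v i : ℤ) : Prop :=
  (2 ≤ v ∧ v ≤ i) ∨ ((v = 1 ∨ v = -1) ∧ (2 ≤ i ∨ i = v)) ∨ (v ≤ -2 ∧ v + 1 ≤ i)

theorem GammaCond.of_lt {v v' i : ℤ} (hvv' : v < v') (hv : v ≠ 0) (hv' : ¬(v = -1 ∧ v' = 1))
    (h : GammaCond v' i) : GammaCond v i := by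
  unfold GammaCond at h ⊢
  omega

theorem mem_gammaD2_iff {n : ℕ} {w : Equiv.Perm ℤ} {l i j : ℤ} :
    (i, j) ∈ GammaD2 n w l ↔ l ≤ j ∧ j ≤ (n : ℤ) - 1 ∧ i ≠ 0 ∧ j - ((n : ℤ) - 1) - l ≤ i ∧
      i ≤ j ∧ |i| ≤ (n : ℤ) - 1 ∧ GammaCond (w (j + 1)) i :=
  Iff.rfl

def setVD2 (a b c : ℤ) : Set ℤ :=
  if 2 ≤ b then Set.Icc b (a - 1)
  else if b = 1 ∨ b = -1 then {c} ∪ Set.Icc 2 (a - 1)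
  else (Set.Icc (b + 1) (-2) ∪ {-c}) ∪ ({c} ∪ Set.Icc 2 (a - 1))

theorem setVD2_eq {a b c : ℤ} (ha : 2 ≤ a) (hb : b ≠ 0) (hc : c = 1 ∨ c = -1)
    (hcb : b = 1 ∨ b = -1 → c = b) :
    setVD2 a b c = {i | GammaCond b i ∧ i ≠ 0 ∧ i ≤ a - 1} := by
  ext i
  simp only [setVD2, GammaCond, Set.mem_ofPred_eq]
  split_ifs with hb2 hb1
  · simp only [Set.mem_Icc]; omega
  · have := hcb hb1
    simp only [Set.mem_union, Set.mem_singleton_iff, Set.mem_Icc]; omega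
  · simp only [Set.mem_union, Set.mem_singleton_iff, Set.mem_Icc]; omega

section IsDPerm

variable {n : ℕ} {w : Equiv.Perm ℤ}

theorem IsDPerm.apply_bounds (hw : IsDPerm n w) {k : ℤ} (hk : 1 ≤ k) (hk' : k ≤ n) :
    -(n : ℤ) ≤ w k ∧ w k ≤ n ∧ w k ≠ 0 := by
  have hshell : 1 ≤ |w k| ∧ |w k| ≤ n := by
    by_contra hout
    have hfix : w k = k := w.injective (hw.1 (w k) hout)
    rw [hfix, abs_of_pos (by omega)] at hout
    omega
  rw [← abs_pos, abs_le] at *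
  omega

theorem symm_abs_apply_eq_or (hodd : ∀ i, w (-i) = -w i) (k : ℤ) :
    w.symm |w k| = k ∨ w.symm |w k| = -k := by
  rcases abs_choice (w k) with h | h <;> rw [h]
  · exact Or.inl (w.symm_apply_apply k)
  · exact Or.inr (by rw [← hodd, w.symm_apply_apply])

end IsDPerm

structure IsUniqueDescentD (n : ℕ) (w : Equiv.Perm ℤ) (l : ℤ) : Prop where
  isDPerm : IsDPerm n w
  isDescent : IsDescentD n w l
  eq_of_isDescent : ∀ l', IsDescentD n w l' → l' = l

namespace IsUniqueDescentD

variable {n : ℕ} {w : Equiv.Perm ℤ} {l : ℤ}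

theorem le_sub_one (h : IsUniqueDescentD n w l) (hl : 0 ≤ l) : l ≤ (n : ℤ) - 1 := by
  rcases h.isDescent.1 with h' | h' <;> omega

theorem apply_lt_apply_add_one (h : IsUniqueDescentD n w l) {k : ℤ} (hk : 1 ≤ k)
    (hk' : k ≤ (n : ℤ) - 1) (hkl : k ≠ l) : w k < w (k + 1) := by
  refine lt_of_le_of_ne (not_lt.1 fun hdesc => hkl (h.eq_of_isDescent k ?_)) ?_
  · exact ⟨Or.inr ⟨hk, hk'⟩, by rwa [abs_of_pos (by omega)]⟩
  · exact fun heq => by simpa using w.injective heq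

theorem neg_apply_one_lt_apply_two (h : IsUniqueDescentD n w l) (hl : l ≠ -1) :
    -w 1 < w 2 := by
  have hneg : w (-1) = -w 1 := h.isDPerm.2.1 1
  refine lt_of_le_of_ne (not_lt.1 fun hdesc => hl (h.eq_of_isDescent (-1) ?_).symm) ?_
  · exact ⟨Or.inl rfl, by rwa [hneg]⟩
  · exact fun heq => by simpa using w.injective (hneg.trans heq)

theorem strictMonoOn_Icc_one (h : IsUniqueDescentD n w l) (hl : 0 ≤ l) :
    StrictMonoOn w (Set.Icc 1 l) :=
  strictMonoOn_of_lt_add_one Set.ordConnected_Icc fun k _ hk hk1 =>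
    h.apply_lt_apply_add_one hk.1 (by have := h.le_sub_one hl; grind) (by grind)

theorem monotoneOn_apply_sub (h : IsUniqueDescentD n w l) (hl : 0 ≤ l) :
    MonotoneOn (fun k => w k - k) (Set.Icc (l + 1) n) :=
  monotoneOn_of_le_add_one Set.ordConnected_Icc fun k _ hk hk1 => by
    have := h.apply_lt_apply_add_one (k := k) (by grind) (by grind) (by grind)
    omega

theorem two_le_apply (h : IsUniqueDescentD n w l) {k : ℤ} (hk : 2 ≤ k) (hkl : k ≤ l) :
    2 ≤ w k := by
  have hln := h.le_sub_one (by omega)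
  have h12 : w 1 < w 2 := h.apply_lt_apply_add_one (k := 1) le_rfl (by omega) (by omega)
  have h1 := h.neg_apply_one_lt_apply_two (by omega)
  have h2k := (h.strictMonoOn_Icc_one (by omega)).monotoneOn ⟨by omega, by omega⟩
    ⟨by omega, hkl⟩ hk
  have := (h.isDPerm.apply_bounds le_rfl (by omega)).2.2
  omega

theorem apply_sub_le_apply_sub (h : IsUniqueDescentD n w l) (hl : 0 ≤ l) {j k : ℤ}
    (hj : l + 1 ≤ j) (hjk : j ≤ k) (hk : k ≤ n) : w j - j ≤ w k - k :=
  h.monotoneOn_apply_sub hl ⟨hj, by omega⟩ ⟨by omega, hk⟩ hjk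

-- Consecutive tail values cannot be `-1, 1`, since `w (-k) = -w k`.
theorem gammaCond_antitoneOn (h : IsUniqueDescentD n w l) (hl : 0 ≤ l) (i : ℤ) :
    AntitoneOn (fun j => GammaCond (w (j + 1)) i) (Set.Icc l ((n : ℤ) - 1)) :=
  antitoneOn_of_add_one_le Set.ordConnected_Icc fun j _ hj hj1 hcond => by
    have hodd := h.isDPerm.2.1 (j + 1)
    refine GammaCond.of_lt (h.apply_lt_apply_add_one (by grind) (by grind) (by grind))
      (h.isDPerm.apply_bounds (by grind) (by grind)).2.2 (fun ⟨hm1, hp1⟩ => ?_) hcond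
    have := w.injective (hodd.trans (by rw [hm1, hp1]; rfl : -w (j + 1) = w (j + 1 + 1)))
    omega

theorem sub_sub_le_of_gammaCond (h : IsUniqueDescentD n w l) (hl : 2 ≤ l) {i j : ℤ}
    (hj : l ≤ j) (hj' : j ≤ (n : ℤ) - 1) (hi : GammaCond (w (j + 1)) i) :
    j - ((n : ℤ) - 1) - l ≤ i := by
  have hgap := h.apply_sub_le_apply_sub (by omega) le_rfl (by omega : l + 1 ≤ j + 1) (by omega)
  have hb := h.isDPerm.apply_bounds (k := l + 1) (by omega) (by omega)
  unfold GammaCond at hi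
  omega

-- `w l, w (j + 2), …, w n` are `n - j` distinct values in `(i, n]`.
theorem le_of_lt_apply_of_lt_apply_add_two (h : IsUniqueDescentD n w l) (hl : 2 ≤ l)
    {i j : ℤ} (hj : l ≤ j) (hj' : j ≤ (n : ℤ) - 2) (hil : i < w l) (hij : i < w (j + 2)) :
    i ≤ j := by
  have hmaps : ∀ k ∈ insert l (Finset.Icc (j + 2) (n : ℤ)), w k ∈ Finset.Icc (i + 1) (n : ℤ) := by
    intro k hk
    rcases Finset.mem_insert.1 hk with rfl | hk
    · have := h.isDPerm.apply_bounds (k := k) (by omega) (by omega)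
      exact Finset.mem_Icc.2 ⟨by omega, by omega⟩
    · obtain ⟨hk1, hk2⟩ := Finset.mem_Icc.1 hk
      have := h.apply_sub_le_apply_sub (by omega) (by omega) hk1 hk2
      have := h.isDPerm.apply_bounds (k := k) (by omega) hk2
      exact Finset.mem_Icc.2 ⟨by omega, by omega⟩
  have hcard := Finset.card_le_card_of_injOn w hmaps w.injective.injOn
  rw [Finset.card_insert_of_notMem (by simp only [Finset.mem_Icc]; omega), Int.card_Icc,
    Int.card_Icc] at hcard
  omega

theorem not_gammaCond_of_mem_gammaOneD2 (h : IsUniqueDescentD n w l) (hl : 2 ≤ l) {i j : ℤ}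
    (hij : (i, j) ∈ GammaOneD2 n w l) (hj : j ≤ (n : ℤ) - 2) : ¬GammaCond (w (j + 2)) i := by
  intro hcond
  obtain ⟨hmem, hnot⟩ := hij
  obtain ⟨hj1, -, hi0, -, hle, habs, -⟩ := mem_gammaD2_iff.1 hmem
  rw [show j + 2 = j + 1 + 1 by ring] at hcond
  exact hnot (mem_gammaD2_iff.2 ⟨by omega, by omega, hi0,
    h.sub_sub_le_of_gammaCond hl (by omega) (by omega) hcond, by omega, habs, hcond⟩)

theorem injOn_fst_gammaOneD2 (h : IsUniqueDescentD n w l) (hl : 2 ≤ l) :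
    Set.InjOn Prod.fst (GammaOneD2 n w l) := by
  have hlt : ∀ p ∈ GammaOneD2 n w l, ∀ q ∈ GammaOneD2 n w l, p.1 = q.1 → ¬p.2 < q.2 := by
    rintro ⟨i, j⟩ hp ⟨i', j'⟩ hq (rfl : i = i') (hjj' : j < j')
    obtain ⟨hq1, hq2, -, -, -, -, hcond⟩ := mem_gammaD2_iff.1 hq.1
    have hj1 := (mem_gammaD2_iff.1 hp.1).1
    refine h.not_gammaCond_of_mem_gammaOneD2 hl hp (by omega) ?_
    rw [show j + 2 = j + 1 + 1 by ring]
    exact h.gammaCond_antitoneOn (by omega) i ⟨by omega, by omega⟩ ⟨hq1, hq2⟩ hjj' hcond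
  intro p hp q hq hpq
  exact Prod.ext hpq
    (le_antisymm (not_lt.1 (hlt q hq p hp hpq.symm)) (not_lt.1 (hlt p hp q hq hpq)))

theorem gammaCond_of_mem_gammaD2 (h : IsUniqueDescentD n w l) (hl : 0 ≤ l) {i j : ℤ}
    (hij : (i, j) ∈ GammaD2 n w l) : GammaCond (w (l + 1)) i := by
  obtain ⟨hj1, hj2, -, -, -, -, hcond⟩ := mem_gammaD2_iff.1 hij
  exact h.gammaCond_antitoneOn hl i ⟨le_rfl, by omega⟩ ⟨hj1, hj2⟩ hj1 hcond

theorem exists_mem_lambdaOneD2 (h : IsUniqueDescentD n w l) (hl : 2 ≤ l) {i : ℤ}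
    (hi : GammaCond (w (l + 1)) i) (hi0 : i ≠ 0) (hia : i ≤ w l - 1) :
    ∃ j, (i, j) ∈ LambdaOneD2 n w l := by
  have hln := h.le_sub_one (by omega)
  obtain ⟨j, ⟨hj1, hj2, hcond⟩, hmax⟩ := Int.exists_greatest_of_bdd
    (P := fun j => l ≤ j ∧ j ≤ (n : ℤ) - 1 ∧ GammaCond (w (j + 1)) i)
    ⟨(n : ℤ) - 1, fun _ hz => hz.2.1⟩ ⟨l, le_rfl, hln, hi⟩
  have hnext : j ≤ (n : ℤ) - 2 → ¬GammaCond (w (j + 2)) i := fun hj hc => by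
    have := hmax (j + 1) ⟨by omega, by omega, by rwa [show j + 1 + 1 = j + 2 by ring]⟩
    omega
  have hwl := h.isDPerm.apply_bounds (k := l) (by omega) (by omega)
  have hij : i ≤ j := by
    by_contra hji
    rcases le_or_gt j ((n : ℤ) - 2) with hj | hj
    · have hw := h.isDPerm.apply_bounds (k := j + 2) (by omega) (by omega)
      have hnc := hnext hj
      unfold GammaCond at hnc
      have := h.le_of_lt_apply_of_lt_apply_add_two (i := i) hl hj1 hj (by omega) (by omega)
      omega
    · omega
  have habs : |i| ≤ (n : ℤ) - 1 := by
    have := h.isDPerm.apply_bounds (k := l + 1) (by omega) (by omega)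
    unfold GammaCond at hi
    exact abs_le.2 ⟨by omega, by omega⟩
  refine ⟨j, ⟨mem_gammaD2_iff.2 ⟨hj1, hj2, hi0, h.sub_sub_le_of_gammaCond hl hj1 hj2 hcond,
    hij, habs, hcond⟩, fun hnext' => ?_⟩, hia⟩
  obtain ⟨-, hj2', -, -, -, -, hc⟩ := mem_gammaD2_iff.1 hnext'
  exact hnext (by omega) (by rwa [show j + 2 = j + 1 + 1 by ring])

theorem bijOn_fst_lambdaOneD2 (h : IsUniqueDescentD n w l) (hl : 2 ≤ l) :
    Set.BijOn Prod.fst (LambdaOneD2 n w l)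
      {i | GammaCond (w (l + 1)) i ∧ i ≠ 0 ∧ i ≤ w l - 1} := by
  refine ⟨fun p hp => ?_, (h.injOn_fst_gammaOneD2 hl).mono fun p hp => hp.1, fun i hi => ?_⟩
  · exact ⟨h.gammaCond_of_mem_gammaD2 (by omega) hp.1.1, (mem_gammaD2_iff.1 hp.1.1).2.2.1,
      hp.2⟩
  · obtain ⟨j, hj⟩ := h.exists_mem_lambdaOneD2 hl hi.1 hi.2.1 hi.2.2
    exact ⟨(i, j), hj, rfl⟩

theorem filter_neg_eq (h : IsUniqueDescentD n w l) (hl : 2 ≤ l) (hb : -1 ≤ w (l + 1)) :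
    (Finset.Icc 1 (n : ℤ)).filter (fun k => w k < 0) =
      ({1, l + 1} : Finset ℤ).filter (fun k => w k < 0) := by
  have hln := h.le_sub_one (by omega)
  ext k
  simp only [Finset.mem_filter, Finset.mem_Icc, Finset.mem_insert, Finset.mem_singleton]
  constructor
  · rintro ⟨⟨hk1, hkn⟩, hneg⟩
    refine ⟨?_, hneg⟩
    by_contra hk
    rcases le_or_gt k l with hkl | hkl
    · have := h.two_le_apply (k := k) (by omega) hkl
      omega
    · have := h.apply_sub_le_apply_sub (j := l + 1) (k := k) (by omega) le_rfl (by omega) hkn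
      have := h.isDPerm.apply_bounds hk1 hkn
      omega
  · rintro ⟨hk, hneg⟩
    exact ⟨by omega, hneg⟩

-- The number of negative entries is even, and only `w 1` and `w (l + 1)` can be negative.
theorem apply_one_neg_iff (h : IsUniqueDescentD n w l) (hl : 2 ≤ l) (hb : -1 ≤ w (l + 1)) :
    w 1 < 0 ↔ w (l + 1) < 0 := by
  have heven := h.isDPerm.2.2
  rw [h.filter_neg_eq hl hb, Finset.filter_insert, Finset.filter_singleton] at heven
  by_cases h1 : w 1 < 0 <;> by_cases h2 : w (l + 1) < 0 <;>
    simp [h1, h2, Finset.card_insert_of_notMem, show (1 : ℤ) ≠ l + 1 by omega] at heven ⊢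

theorem symm_abs_apply_one (h : IsUniqueDescentD n w l) (hl : 2 ≤ l)
    (hb : w (l + 1) = 1 ∨ w (l + 1) = -1) : w.symm |w 1| = w (l + 1) := by
  have hsign := h.apply_one_neg_iff hl (by omega)
  have hw1 := h.isDPerm.apply_bounds (k := 1) le_rfl (by have := h.le_sub_one (by omega); omega)
  rcases hb with hb | hb
  · rw [abs_of_pos (by omega), w.symm_apply_apply, hb]
  · rw [abs_of_neg (by omega), ← h.isDPerm.2.1, w.symm_apply_apply, hb]

end IsUniqueDescentD

theorem lambdaOne_bijOn_D_typeGE2_general (n : ℕ)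
    (w : Equiv.Perm ℤ) (hw : IsDPerm n w)
    (l : ℤ) (hl : IsDescentD n w l) (hl' : ∀ l', IsDescentD n w l' → l' = l)
    (hl2 : 2 ≤ l)
    (a b : ℤ) (ha : a = w l) (hb : b = w (l + 1))
    (R : Set ℤ) (hR : R = ⇑w '' Set.Icc (l + 1) (n : ℤ))
    (r : ℤ) (hr0 : 0 ≤ r)
    (hr2 : ¬(r + 1 ∈ R ∨ -(r + 1) ∈ R))
    (c : ℤ) (hc : c = if 1 ≤ r then w.symm |w 1| else 1)
    (V : Set ℤ)
    (hV : V = if 2 ≤ b then Set.Icc b (a - 1)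
      else if b = 1 ∨ b = -1 then {c} ∪ Set.Icc 2 (a - 1)
      else (Set.Icc (b + 1) (-2) ∪ {-c}) ∪ ({c} ∪ Set.Icc 2 (a - 1))) :
    Set.BijOn Prod.fst (LambdaOneD2 n w l) V := by
  have h : IsUniqueDescentD n w l := ⟨hw, hl, hl'⟩
  have hln := h.le_sub_one (by omega)
  have hbR : b ∈ R := hR ▸ ⟨l + 1, ⟨le_rfl, by omega⟩, hb.symm⟩
  have hc1 : c = 1 ∨ c = -1 := by
    rw [hc]
    split_ifs
    · exact symm_abs_apply_eq_or hw.2.1 1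
    · exact Or.inl rfl
  have hcb : b = 1 ∨ b = -1 → c = b := by
    intro hb1
    have hr : 1 ≤ r := by
      by_contra hr
      obtain rfl : r = 0 := by omega
      rcases hb1 with rfl | rfl
      exacts [hr2 (Or.inl hbR), hr2 (Or.inr hbR)]
    rw [hc, if_pos hr, hb, h.symm_abs_apply_one hl2 (hb ▸ hb1)]
  have hV' := hV.trans (setVD2_eq (a := a) (b := b) (c := c) (ha ▸ h.two_le_apply hl2 le_rfl)
    (hb ▸ (hw.apply_bounds (k := l + 1) (by omega) (by omega)).2.2) hc1 hcb)
  subst ha hb hV'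
  exact h.bijOn_fst_lambdaOneD2 hl2

/-- Let `w ∈ W(D_n)` have exactly one descent, at `l ≥ 2`.  With `a = w(l)`, `b = w(l+1)`,
`R = w({l+1,…,n})`, `r = max{k ≥ 0 : {1,…,k} ⊆ R ∪ (−R)}`, `c = w⁻¹(|w(1)|)` if `r ≥ 1` and
`c = 1` if `r = 0`, and `V = {b,…,a−1}` if `b ≥ 2`, `V = {c} ∪ {2,…,a−1}` if `b ∈ {1,−1}`,
`V = ({b+1,…,−2} ∪ {−c}) ∪ ({c} ∪ {2,…,a−1})` if `b ≤ −2`, the map `(i,j) ↦ i` is a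
bijection from `Λ₁(w)` onto `V`. -/
theorem lambdaOne_bijOn_D_typeGE2 (n : ℕ) (hn : 4 ≤ n)
    (w : Equiv.Perm ℤ) (hw : IsDPerm n w)
    (l : ℤ) (hl : IsDescentD n w l) (hl' : ∀ l', IsDescentD n w l' → l' = l)
    (hl2 : 2 ≤ l)
    (a b : ℤ) (ha : a = w l) (hb : b = w (l + 1))
    (R : Set ℤ) (hR : R = ⇑w '' Set.Icc (l + 1) (n : ℤ))
    (r : ℤ) (hr0 : 0 ≤ r) (hr1 : ∀ k : ℤ, 1 ≤ k → k ≤ r → (k ∈ R ∨ -k ∈ R))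
    (hr2 : ¬(r + 1 ∈ R ∨ -(r + 1) ∈ R))
    (c : ℤ) (hc : c = if 1 ≤ r then w.symm |w 1| else 1)
    (V : Set ℤ)
    (hV : V = if 2 ≤ b then Set.Icc b (a - 1)
      else if b = 1 ∨ b = -1 then {c} ∪ Set.Icc 2 (a - 1)
      else (Set.Icc (b + 1) (-2) ∪ {-c}) ∪ ({c} ∪ Set.Icc 2 (a - 1))) :
    Set.BijOn Prod.fst (LambdaOneD2 n w l) V :=
  lambdaOne_bijOn_D_typeGE2_general n w hw l hl hl' hl2 a b ha hb R hR r hr0 hr2 c hc V hV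
end
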